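/- arXiv:1803.06140 — 9 statements merged into one kernel-verified Lean document; each statement's English description precedes it below -/
import Mathlib

section
/- Let X and Y be sets and let R ⊆ X × Y be a binary relation. For x ∈ X let R_x = {y ∈ Y : (x,y) ∈ R} denote the fiber of R at x. Then R can be written as a finite union of rectangles, i.e., there exist finitely many sets A₁,…,A_ℓ ⊆ X and B₁,…,B_ℓ ⊆ Y with R = ⋃_{i=1}^ℓ A_i × B_i, if and only if the set of fibers {R_x : x ∈ X} is finite (equivalently, the equivalence relation E on X defined by x E x' iff R_x = R_{x'} has finitely many equivalence classes). -/
/-- A binary relation `R ⊆ X × Y` is a finite union of rectangles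
`Aᵢ × Bᵢ` if and only if the set of fibers `{R_x : x ∈ X}` is finite. -/
theorem finite_union_of_rectangles_iff_finitely_many_fibers
    {X Y : Type*} (R : Set (X × Y)) :
    (∃ (ℓ : ℕ) (A : Fin ℓ → Set X) (B : Fin ℓ → Set Y),
        R = ⋃ i : Fin ℓ, (A i) ×ˢ (B i)) ↔
    (Set.range fun x : X => {y : Y | (x, y) ∈ R}).Finite := by
  constructor
  · rintro ⟨ℓ, A, B, rfl⟩
    have key : (Set.range fun x : X => {y : Y | (x, y) ∈ ⋃ i : Fin ℓ, (A i) ×ˢ (B i)})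
        ⊆ Set.range fun s : Set (Fin ℓ) => ⋃ i ∈ s, B i := by
      rintro _ ⟨x, rfl⟩
      refine ⟨{i | x ∈ A i}, ?_⟩
      ext y
      simp [Set.mem_iUnion, and_comm]
    exact (Set.finite_range _).subset key
  · intro hfin
    haveI := hfin.fintype
    set S := Set.range fun x : X => {y : Y | (x, y) ∈ R} with hS
    let e := (Fintype.equivFin S).symm
    refine ⟨Fintype.card S, fun i => {x | {y : Y | (x, y) ∈ R} = (e i : Set Y)},
      fun i => (e i : Set Y), ?_⟩
    ext ⟨x, y⟩
    simp only [Set.mem_iUnion, Set.mem_prod, Set.mem_setOf_eq]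
    constructor
    · intro hxy
      refine ⟨e.symm ⟨{y : Y | (x, y) ∈ R}, ⟨x, rfl⟩⟩, ?_, ?_⟩
      · simp
      · simp [hxy]
    · rintro ⟨i, hx, hy⟩
      have : y ∈ {y : Y | (x, y) ∈ R} := hx ▸ hy
      exact this
end

section
/- Let Σ be an alphabet and let E be an equivalence relation on the set of ω-words over Σ. Then the following are equivalent: (i) there exists an infinite set of ultimately periodic ω-words over Σ any two distinct members of which are not E-equivalent; (ii) for every k > 0 there exist finite words u₁,…,u_k ∈ Σ* and nonempty finite words v₁,…,v_k ∈ Σ⁺ with |u_i| = |u_j| and |v_i| = |v_j| for all 1 ≤ i ≤ j ≤ k, such that (u_i·v_i^ω, u_j·v_j^ω) ∉ E for all 1 ≤ i < j ≤ k. -/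
/-- The ultimately periodic ω-word `u · v^ω`: position `i` is `u[i]` for `i < |u|`,
and `v[(i - |u|) mod |v|]` afterwards (intended for nonempty `v`). -/
def upWord {σ : Type*} [Inhabited σ] (u v : List σ) : ℕ → σ := fun i =>
  if i < u.length then u.getD i default
  else v.getD ((i - u.length) % v.length) default

/-- An ω-word is ultimately periodic if it equals `u · v^ω` for some finite word `u`
and nonempty finite word `v`. -/
def UltimatelyPeriodic {σ : Type*} [Inhabited σ] (w : ℕ → σ) : Prop :=
  ∃ u v : List σ, v ≠ [] ∧ w = upWord u v

lemma upWord_congr_mod {σ : Type*} [Inhabited σ] (u v : List σ) {a b : ℕ}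
    (ha : u.length ≤ a) (hb : u.length ≤ b) (h : a ≡ b [MOD v.length]) :
    upWord u v a = upWord u v b := by
  have h' : a - u.length ≡ b - u.length [MOD v.length] := by
    apply Nat.ModEq.add_right_cancel' u.length
    simpa [Nat.sub_add_cancel ha, Nat.sub_add_cancel hb] using h
  simp only [upWord, if_neg (by omega : ¬ a < u.length), if_neg (by omega : ¬ b < u.length)]
  rw [h']

lemma upWord_normalize {σ : Type*} [Inhabited σ] (u v : List σ) (L P : ℕ)
    (hL : u.length ≤ L) (hP : v.length ∣ P) (hP0 : 0 < P) :
    upWord (List.ofFn fun i : Fin L => upWord u v i)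
      (List.ofFn fun j : Fin P => upWord u v (L + j)) = upWord u v := by
  funext i
  by_cases hi : i < L
  · rw [upWord]
    simp only [List.length_ofFn, if_pos hi]
    rw [List.getD_eq_getElem _ _ (by simpa using hi)]
    simp
  · push_neg at hi
    rw [upWord]
    simp only [List.length_ofFn, if_neg (not_lt.mpr hi)]
    have hm : (i - L) % P < P := Nat.mod_lt _ hP0
    rw [List.getD_eq_getElem _ _ (by simpa using hm)]
    simp only [List.getElem_ofFn]
    apply upWord_congr_mod u v (by omega) (by omega)
    have h1 : (i - L) % P ≡ i - L [MOD v.length] :=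
      (Nat.mod_modEq (i - L) P).of_dvd hP
    have h2 : L + (i - L) % P ≡ L + (i - L) [MOD v.length] := Nat.ModEq.add_left L h1
    simpa [Nat.add_sub_cancel' hi] using h2

/-- for an equivalence relation `E` on ω-words, there are infinitely many
pairwise non-`E`-equivalent ultimately periodic ω-words iff for every `k > 0` there are
`k` pairwise non-equivalent ultimately periodic words `uᵢ · vᵢ^ω` whose prefixes `uᵢ`
all have the same length and whose periods `vᵢ` all have the same length. -/
theorem infinitely_many_classes_iff_common_length_witnesses
    {σ : Type*} [Fintype σ] [Inhabited σ]
    (E : Set ((ℕ → σ) × (ℕ → σ)))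
    (hE : Equivalence fun x y : ℕ → σ => (x, y) ∈ E) :
    (∃ S : Set (ℕ → σ), S.Infinite ∧ (∀ w ∈ S, UltimatelyPeriodic w) ∧
        ∀ w ∈ S, ∀ w' ∈ S, w ≠ w' → (w, w') ∉ E) ↔
    (∀ k : ℕ, 0 < k → ∃ u v : Fin k → List σ,
        (∀ i, v i ≠ []) ∧
        (∀ i j, (u i).length = (u j).length) ∧
        (∀ i j, (v i).length = (v j).length) ∧
        ∀ i j : Fin k, i < j → (upWord (u i) (v i), upWord (u j) (v j)) ∉ E) := by
  constructor
  · rintro ⟨S, hSinf, hSup, hSne⟩ k hk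
    obtain e := hSinf.natEmbedding
    set w : Fin k → (ℕ → σ) := fun i => (e i.val : ℕ → σ) with hw
    have hwS : ∀ i, w i ∈ S := fun i => (e i.val).2
    have hwne : ∀ i j : Fin k, i ≠ j → w i ≠ w j := by
      intro i j hij hcontra
      exact hij (Fin.val_injective (e.injective (Subtype.ext hcontra)))
    choose u v hv huv using fun i => hSup (w i) (hwS i)
    set L : ℕ := Finset.univ.sup (fun i => (u i).length) with hLdef
    set P : ℕ := ∏ i, (v i).length with hPdef
    have hP0 : 0 < P := Finset.prod_pos (fun i _ =>
      List.length_pos_iff.mpr (hv i))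
    have hdvd : ∀ i, (v i).length ∣ P := fun i =>
      Finset.dvd_prod_of_mem _ (Finset.mem_univ i)
    have hLi : ∀ i, (u i).length ≤ L := fun i =>
      Finset.le_sup (f := fun i => (u i).length) (Finset.mem_univ i)
    refine ⟨fun i => List.ofFn fun a : Fin L => w i a,
            fun i => List.ofFn fun a : Fin P => w i (L + a),
            ?_, ?_, ?_, ?_⟩
    · intro i
      simp only [ne_eq, ← List.length_eq_zero_iff, List.length_ofFn]
      omega
    · intro i j; simp
    · intro i j; simp
    · intro i j hij
      have hnorm : ∀ i, upWord (List.ofFn fun a : Fin L => w i a)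
          (List.ofFn fun a : Fin P => w i (L + a)) = w i := by
        intro i
        conv_lhs => rw [huv i]
        rw [upWord_normalize (u i) (v i) L P (hLi i) (hdvd i) hP0, ← huv i]
      rw [hnorm i, hnorm j]
      exact hSne (w i) (hwS i) (w j) (hwS j) (hwne i j (Fin.ne_of_lt hij))
  · intro h
    set T : Set (ℕ → σ) := {w | UltimatelyPeriodic w} with hT
    set f : (ℕ → σ) → Set (ℕ → σ) := fun w => {x | (w, x) ∈ E} with hf
    have hfeq : ∀ a b : ℕ → σ, (a, b) ∈ E → f a = f b := by
      intro a b hab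
      ext x
      exact ⟨fun hx => hE.trans (hE.symm hab) hx, fun hx => hE.trans hab hx⟩
    by_cases hfin : (f '' T).Finite
    · exfalso
      set n := hfin.toFinset.card with hn
      obtain ⟨u, v, hv, _, _, hne⟩ := h (n + 1) (by omega)
      set w : Fin (n + 1) → (ℕ → σ) := fun i => upWord (u i) (v i) with hw
      have hwT : ∀ i, w i ∈ T := fun i => ⟨u i, v i, hv i, rfl⟩
      have hmaps : ∀ i ∈ (Finset.univ : Finset (Fin (n + 1))),
          f (w i) ∈ hfin.toFinset := by
        intro i _
        simp only [Set.Finite.mem_toFinset]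
        exact ⟨w i, hwT i, rfl⟩
      obtain ⟨i, _, j, _, hijne, hij⟩ :=
        Finset.exists_ne_map_eq_of_card_lt_of_maps_to
          (by simp [hn]) hmaps
      have key : ∀ i j : Fin (n + 1), f (w i) = f (w j) → (w i, w j) ∈ E := by
        intro i j hfij
        have : w j ∈ f (w j) := hE.refl (w j)
        rw [← hfij] at this
        exact this
      rcases lt_or_gt_of_ne hijne with hlt | hgt
      · exact hne i j hlt (key i j hij)
      · exact hne j i hgt (key j i hij.symm)
    · have hinf : (f '' T).Infinite := hfin
      have : Infinite ↥(f '' T) := hinf.to_subtype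
      set g : ↥(f '' T) → (ℕ → σ) := fun c => c.2.choose with hg
      have hgspec : ∀ c : ↥(f '' T), g c ∈ T ∧ f (g c) = c := fun c => c.2.choose_spec
      have hginj : Function.Injective g := by
        intro c c' hcc'
        apply Subtype.ext
        rw [← (hgspec c).2, ← (hgspec c').2, hcc']
      refine ⟨Set.range g, Set.infinite_range_of_injective hginj, ?_, ?_⟩
      · rintro w ⟨c, rfl⟩
        exact (hgspec c).1
      · rintro w ⟨c, rfl⟩ w' ⟨c', rfl⟩ hne hcontra
        apply hne
        have : c = c' := by
          apply Subtype.ext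
          rw [← (hgspec c).2, ← (hgspec c').2]
          exact hfeq _ _ hcontra
        rw [this]
end

section
/- Let Σ be an alphabet equipped with a linear order, let # ∉ Σ be a fresh symbol, and let E be an equivalence relation on the set of ω-words over Σ. Then the following are equivalent: (i) there exists an infinite set of ultimately periodic ω-words over Σ any two distinct members of which are not E-equivalent; (ii) for every k there exist m, n > 0 such that the set L_#(E) ∩ {u#v : u ∈ Σⁿ, v ∈ Σᵐ} has more than k elements. -/
/-- The encoding `u#v` of a pair of finite words over `Σ` as a finite word over
`Σ ∪ {#}`, where the fresh symbol `#` is modelled by `none : Option σ`. -/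
def enc {σ : Type*} (u v : List σ) : List (Option σ) :=
  u.map some ++ [none] ++ v.map some

/-- The relation `E_#` over finite words: pairs `(u#v, x#y)` with `v, y` nonempty,
`|u| = |x|`, `|v| = |y|`, and `(u·v^ω, x·y^ω) ∈ E`. -/
def EHash {σ : Type*} [Inhabited σ] (E : Set ((ℕ → σ) × (ℕ → σ))) :
    Set (List (Option σ) × List (Option σ)) :=
  {p | ∃ u v x y : List σ, v ≠ [] ∧ y ≠ [] ∧ u.length = x.length ∧ v.length = y.length ∧
    p.1 = enc u v ∧ p.2 = enc x y ∧ (upWord u v, upWord x y) ∈ E}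

/-- The set of representatives `L_#(E)`: words `u#v` such that no lexicographically
smaller word `x#y` is `E_#`-related to `u#v`.  Here `lt` is the (arbitrary) extension
of the order on `Σ` to `Σ ∪ {#}`, and words are compared lexicographically. -/
def LHash {σ : Type*} [Inhabited σ] (lt : Option σ → Option σ → Prop)
    (E : Set ((ℕ → σ) × (ℕ → σ))) : Set (List (Option σ)) :=
  {w | (∃ u v : List σ, v ≠ [] ∧ w = enc u v) ∧
    ¬ ∃ w' : List (Option σ), List.Lex lt w' w ∧ (w', w) ∈ EHash E}

/-!
An ultimately periodic word `u·v^ω` can be rewritten as `x·y^ω` with `|x| = n` and `|y| = m` for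
every `n ≥ |u|` and every positive multiple `m` of `|v|`, so finitely many such words share a
common shape `(n, m)`. For a fixed shape there are finitely many words `a#b`, so every class that
meets the shape contains a lexicographically least one, which lies in `L_#(E)`; and two distinct
words of the same shape in `L_#(E)` lie in distinct classes, since the larger one would otherwise
be excluded. Hence `L_#(E)` has unboundedly many words of a single shape exactly when infinitely
many classes contain an ultimately periodic word.
-/

section Words

variable {σ : Type*}

lemma enc_length (u v : List σ) : (enc u v).length = u.length + 1 + v.length := by
  simp [enc]
  omega

lemma enc_inj {u v x y : List σ} (h : enc u v = enc x y) : u = x ∧ v = y := by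
  induction u generalizing x with
  | nil =>
    cases x with
    | nil =>
      exact ⟨rfl, List.map_injective_iff.mpr (Option.some_injective σ) (by simpa [enc] using h)⟩
    | cons c x => simp [enc] at h
  | cons c u ih =>
    cases x with
    | nil => simp [enc] at h
    | cons d x =>
      simp only [enc, List.map_cons, List.cons_append, List.cons.injEq, Option.some.injEq] at h
      exact ⟨by rw [h.1, (ih h.2).1], (ih h.2).2⟩

variable [Inhabited σ]

lemma upWord_periodic (u v : List σ) :
    Function.Periodic (fun j => upWord u v (u.length + j)) v.length := fun j => by
  simp only [upWord, Nat.add_sub_cancel_left, Nat.add_mod_right]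
  simp

lemma upWord_ofFn {w : ℕ → σ} {n m : ℕ} (hm : 0 < m)
    (hw : Function.Periodic (fun j => w (n + j)) m) :
    upWord (List.ofFn fun i : Fin n => w i) (List.ofFn fun j : Fin m => w (n + j)) = w := by
  funext i
  by_cases hi : i < n
  · simp [upWord, hi, List.getD_eq_getElem?_getD]
  · have hmod := hw.map_mod_nat (i - n)
    simp only [upWord, List.length_ofFn, hi, if_false, List.getD_eq_getElem?_getD,
      List.getElem?_ofFn, Nat.mod_lt _ hm, dif_pos, Option.getD_some] at hmod ⊢
    rw [hmod, Nat.add_sub_cancel' (not_lt.mp hi)]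

lemma exists_upWord_eq_of_le_of_dvd (u v : List σ) {n m : ℕ} (hn : u.length ≤ n)
    (hm : v.length ∣ m) (hm0 : 0 < m) :
    ∃ x y : List σ, x.length = n ∧ y.length = m ∧ upWord u v = upWord x y := by
  obtain ⟨q, rfl⟩ := hm
  have hper : Function.Periodic (fun j => upWord u v (n + j)) (v.length * q) := by
    intro j
    simpa [← add_assoc, Nat.add_sub_cancel' hn, mul_comm] using
      ((upWord_periodic u v).nat_mul q) (n - u.length + j)
  exact ⟨_, _, List.length_ofFn, List.length_ofFn, (upWord_ofFn hm0 hper).symm⟩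

lemma exists_common_length_upWord (t : Finset (ℕ → σ)) (ht : ∀ w ∈ t, UltimatelyPeriodic w) :
    ∃ n m : ℕ, 0 < n ∧ 0 < m ∧
      ∀ w ∈ t, ∃ u v : List σ, u.length = n ∧ v.length = m ∧ w = upWord u v := by
  choose! u v hv hw using ht
  have hm : 0 < ∏ w ∈ t, (v w).length :=
    Finset.prod_pos fun w hwt => List.length_pos_iff.mpr (hv w hwt)
  refine ⟨(t.sup fun w => (u w).length) + 1, _, Nat.succ_pos _, hm, fun w hwt => ?_⟩
  rw [hw w hwt]
  exact exists_upWord_eq_of_le_of_dvd _ _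
    ((Finset.le_sup (f := fun w => (u w).length) hwt).trans (Nat.le_succ _))
    (Finset.dvd_prod_of_mem _ hwt) hm

end Words

lemma Set.Finite.exists_forall_not_rel {α : Type*} {r : α → α → Prop} [IsStrictOrder α r]
    {s : Set α} (hs : s.Finite) (hne : s.Nonempty) : ∃ a ∈ s, ∀ x ∈ s, ¬ r x a := by
  obtain ⟨⟨a, ha⟩, -, hmin⟩ :=
    WellFounded.has_min (hs.wellFoundedOn (r := r)) Set.univ ⟨⟨_, hne.some_mem⟩, trivial⟩
  exact ⟨a, ha, fun x hx => hmin ⟨x, hx⟩ trivial⟩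

instance List.Lex.isStrictTotalOrder {α : Type*} (r : α → α → Prop) [IsStrictTotalOrder α r] :
    IsStrictTotalOrder (List α) (List.Lex r) :=
  { isStrictWeakOrder_of_isOrderConnected with }

section LHash

variable {σ : Type*} [Inhabited σ] {lt : Option σ → Option σ → Prop}
  {E : Set ((ℕ → σ) × (ℕ → σ))}

lemma exists_enc_mem_LHash [Finite σ] [IsStrictTotalOrder (Option σ) lt]
    (hE : Equivalence fun x y : ℕ → σ => (x, y) ∈ E) (a b : List σ) (hb : b ≠ []) :
    ∃ a' b' : List σ, a'.length = a.length ∧ b'.length = b.length ∧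
      (upWord a' b', upWord a b) ∈ E ∧ enc a' b' ∈ LHash lt E := by
  set C := {z | ∃ a' b' : List σ, a'.length = a.length ∧ b'.length = b.length ∧
    z = enc a' b' ∧ (upWord a' b', upWord a b) ∈ E}
  have hC : C.Finite := (List.finite_length_eq (Option σ) (a.length + 1 + b.length)).subset <| by
    rintro z ⟨a', b', ha, hb, rfl, -⟩
    simp [enc_length, ha, hb]
  obtain ⟨z, ⟨a', b', ha', hb', rfl, hE'⟩, hmin⟩ :=
    hC.exists_forall_not_rel (r := List.Lex lt) ⟨_, a, b, rfl, rfl, rfl, hE.refl _⟩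
  refine ⟨a', b', ha', hb', hE', ⟨a', b', ?_, rfl⟩, ?_⟩
  · rw [← List.length_pos_iff, hb']
    exact List.length_pos_iff.mpr hb
  rintro ⟨w, hlex, p, q, p', q', -, -, hp, hq, rfl, he, hpq⟩
  obtain ⟨rfl, rfl⟩ := enc_inj he.symm
  exact hmin _ ⟨p, q, hp.trans ha', hq.trans hb', rfl, hE.trans hpq hE'⟩ hlex

lemma enc_eq_of_mem_LHash [Std.Trichotomous lt]
    (hEsymm : ∀ x y : ℕ → σ, (x, y) ∈ E → (y, x) ∈ E) {a b a' b' : List σ}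
    (hb : b ≠ []) (hb' : b' ≠ []) (ha : a.length = a'.length) (hbl : b.length = b'.length)
    (h : enc a b ∈ LHash lt E) (h' : enc a' b' ∈ LHash lt E)
    (hrel : (upWord a b, upWord a' b') ∈ E) : enc a b = enc a' b' := by
  rcases trichotomous_of (List.Lex lt) (enc a b) (enc a' b') with hl | he | hl
  · exact (h'.2 ⟨_, hl, a, b, a', b', hb, hb', ha, hbl, rfl, rfl, hrel⟩).elim
  · exact he
  · exact (h.2 ⟨_, hl, a', b', a, b, hb', hb, ha.symm, hbl.symm, rfl, rfl, hEsymm _ _ hrel⟩).elim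

end LHash

lemma Setoid.exists_infinite_pairwise_not_rel {α : Type*} (r : Setoid α) {P : Set α}
    (h : (Quotient.mk r '' P).Infinite) :
    ∃ S ⊆ P, S.Infinite ∧ ∀ x ∈ S, ∀ y ∈ S, x ≠ y → ¬ r x y := by
  obtain ⟨-, x₀, -, -⟩ := h.nonempty
  have : Nonempty α := ⟨x₀⟩
  set rep := Function.invFunOn (Quotient.mk r) P
  refine ⟨rep '' (Quotient.mk r '' P), ?_, h.image (Function.invFunOn_injOn_image _ _), ?_⟩
  · rintro _ ⟨_, ⟨x, hx, rfl⟩, rfl⟩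
    exact Function.invFunOn_mem ⟨x, hx, rfl⟩
  · rintro _ ⟨_, ⟨x, hx, rfl⟩, rfl⟩ _ ⟨_, ⟨y, hy, rfl⟩, rfl⟩ hne hxy
    have hmk : Quotient.mk r (rep ⟦x⟧) = Quotient.mk r (rep ⟦y⟧) := Quotient.sound hxy
    rw [Function.invFunOn_eq (f := Quotient.mk r) ⟨x, hx, rfl⟩,
      Function.invFunOn_eq (f := Quotient.mk r) ⟨y, hy, rfl⟩] at hmk
    exact hne (congrArg rep hmk)

section Classes

variable {σ : Type*} [Inhabited σ] {lt : Option σ → Option σ → Prop}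
  {E : Set ((ℕ → σ) × (ℕ → σ))}

def upClasses (hE : Equivalence fun x y : ℕ → σ => (x, y) ∈ E) : Set (Quotient ⟨_, hE⟩) :=
  Quotient.mk _ '' {w | UltimatelyPeriodic w}

lemma exists_LHash_finset_card_eq [Finite σ] [IsStrictTotalOrder (Option σ) lt]
    (hE : Equivalence fun x y : ℕ → σ => (x, y) ∈ E) (t : Finset (ℕ → σ))
    (hup : ∀ w ∈ t, UltimatelyPeriodic w) (hne : ∀ w ∈ t, ∀ w' ∈ t, w ≠ w' → (w, w') ∉ E) :
    ∃ m n : ℕ, 0 < m ∧ 0 < n ∧ ∃ s : Finset (List (Option σ)),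
      (∀ w ∈ s, w ∈ LHash lt E ∧ ∃ u v : List σ, u.length = n ∧ v.length = m ∧ w = enc u v) ∧
      s.card = t.card := by
  classical
  obtain ⟨n, m, hn, hm, hrep⟩ := exists_common_length_upWord t hup
  have hLH : ∀ w ∈ t, ∃ a b : List σ, a.length = n ∧ b.length = m ∧
      (upWord a b, w) ∈ E ∧ enc a b ∈ LHash lt E := by
    intro w hw
    obtain ⟨u, v, rfl, rfl, rfl⟩ := hrep w hw
    exact exists_enc_mem_LHash hE u v (List.length_pos_iff.mp hm)
  choose! a b ha hb hab hmem using hLH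
  refine ⟨m, n, hm, hn, t.image fun w => enc (a w) (b w), ?_, Finset.card_image_of_injOn ?_⟩
  · simp only [Finset.mem_image]
    rintro _ ⟨w, hw, rfl⟩
    exact ⟨hmem w hw, a w, b w, ha w hw, hb w hw, rfl⟩
  · intro w hw w' hw' heq
    obtain ⟨h1, h2⟩ := enc_inj heq
    by_contra hww'
    refine hne w hw w' hw' hww' (hE.trans (hE.symm (hab w hw)) ?_)
    rw [h1, h2]
    exact hab w' hw'

lemma card_le_ncard_upClasses [Std.Trichotomous lt]
    (hE : Equivalence fun x y : ℕ → σ => (x, y) ∈ E) {n m : ℕ} (hm : 0 < m)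
    (s : Finset (List (Option σ)))
    (hs : ∀ w ∈ s, w ∈ LHash lt E ∧ ∃ u v : List σ, u.length = n ∧ v.length = m ∧ w = enc u v)
    (hfin : (upClasses hE).Finite) : s.card ≤ (upClasses hE).ncard := by
  choose! u v hu hv henc using fun w hw => (hs w hw).2
  have hv0 : ∀ w ∈ s, v w ≠ [] := fun w hw => List.length_pos_iff.mp (hv w hw ▸ hm)
  rw [← Set.ncard_coe_finset]
  refine Set.ncard_le_ncard_of_injOn (fun w => Quotient.mk ⟨_, hE⟩ (upWord (u w) (v w)))
    (fun w hw => ⟨_, ⟨u w, v w, hv0 w hw, rfl⟩, rfl⟩) (fun w hw w' hw' heq => ?_) hfin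
  have hmem : ∀ w ∈ s, enc (u w) (v w) ∈ LHash lt E := fun w hw => henc w hw ▸ (hs w hw).1
  rw [henc w hw, henc w' hw']
  exact enc_eq_of_mem_LHash (fun _ _ => hE.symm) (hv0 w hw) (hv0 w' hw')
    (by rw [hu w hw, hu w' hw']) (by rw [hv w hw, hv w' hw']) (hmem w hw) (hmem w' hw')
    (Quotient.exact heq)

end Classes

theorem infinitely_many_classes_iff_LHash_large_general
    {σ : Type*} [Fintype σ] [Inhabited σ]
    (lt : Option σ → Option σ → Prop)
    (hlt : IsStrictTotalOrder (Option σ) lt)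
    (E : Set ((ℕ → σ) × (ℕ → σ)))
    (hE : Equivalence fun x y : ℕ → σ => (x, y) ∈ E) :
    (∃ S : Set (ℕ → σ), S.Infinite ∧ (∀ w ∈ S, UltimatelyPeriodic w) ∧
        ∀ w ∈ S, ∀ w' ∈ S, w ≠ w' → (w, w') ∉ E) ↔
    (∀ k : ℕ, ∃ m n : ℕ, 0 < m ∧ 0 < n ∧
      ∃ s : Finset (List (Option σ)),
        (∀ w ∈ s, w ∈ LHash lt E ∧
          ∃ u v : List σ, u.length = n ∧ v.length = m ∧ w = enc u v) ∧
        k < s.card) := by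
  constructor
  · rintro ⟨S, hS, hup, hne⟩ k
    obtain ⟨t, htS, htk⟩ := hS.exists_subset_card_eq (k + 1)
    obtain ⟨m, n, hm, hn, s, hs, hst⟩ := exists_LHash_finset_card_eq (lt := lt) hE t
      (fun w hw => hup w (htS hw)) (fun w hw w' hw' => hne w (htS hw) w' (htS hw'))
    exact ⟨m, n, hm, hn, s, hs, by omega⟩
  · intro h
    have hinf : (upClasses hE).Infinite := fun hfin => by
      obtain ⟨m, n, hm, -, s, hs, hk⟩ := h (upClasses hE).ncard
      exact (card_le_ncard_upClasses hE hm s hs hfin).not_gt hk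
    obtain ⟨S, hup, hS, hne⟩ := Setoid.exists_infinite_pairwise_not_rel _ hinf
    exact ⟨S, hS, hup, hne⟩

/-- for an equivalence relation `E` on ω-words over a linearly ordered
alphabet `Σ`, there are infinitely many pairwise non-`E`-equivalent ultimately periodic
ω-words iff for every `k` there are `m, n > 0` such that
`L_#(E) ∩ {u#v : u ∈ Σⁿ, v ∈ Σᵐ}` has more than `k` elements. -/
theorem infinitely_many_classes_iff_LHash_large
    {σ : Type*} [Fintype σ] [Inhabited σ] [LinearOrder σ]
    (lt : Option σ → Option σ → Prop)
    (hlt : IsStrictTotalOrder (Option σ) lt)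
    (hext : ∀ a b : σ, lt (some a) (some b) ↔ a < b)
    (E : Set ((ℕ → σ) × (ℕ → σ)))
    (hE : Equivalence fun x y : ℕ → σ => (x, y) ∈ E) :
    (∃ S : Set (ℕ → σ), S.Infinite ∧ (∀ w ∈ S, UltimatelyPeriodic w) ∧
        ∀ w ∈ S, ∀ w' ∈ S, w ≠ w' → (w, w') ∉ E) ↔
    (∀ k : ℕ, ∃ m n : ℕ, 0 < m ∧ 0 < n ∧
      ∃ s : Finset (List (Option σ)),
        (∀ w ∈ s, w ∈ LHash lt E ∧
          ∃ u v : List σ, u.length = n ∧ v.length = m ∧ w = enc u v) ∧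
        k < s.card) :=
  infinitely_many_classes_iff_LHash_large_general lt hlt E hE
end

section
/- Let Σ be an alphabet containing a distinguished symbol # and let Σ₀ = Σ \ {#}. Let I ⊆ ℕ × ℕ be a finite index set and let (A_i)_{i∈ℕ} and (B_j)_{j∈ℕ} be families of regular languages over Σ₀ such that A_i and B_j are nonempty for every (i,j) ∈ I. Let L = ⋃_{(i,j)∈I} A_i·{#}·B_j (concatenation of languages). Then there exists k < ω such that for all m, n ≥ 0 the set L ∩ {u#v : u ∈ Σ₀ⁿ, v ∈ Σ₀ᵐ} has at most k elements, if and only if for all (i,j) ∈ I both A_i and B_j are slender. -/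
/-- A language is slender if there is a uniform bound `k` on the number of its words
of any given length. -/
def Slender {σ : Type*} (L : Set (List σ)) : Prop :=
  ∃ k : ℕ, ∀ ℓ : ℕ, {w ∈ L | w.length = ℓ}.Finite ∧ {w ∈ L | w.length = ℓ}.ncard ≤ k

/-- Regularity of a language of finite words: acceptance by a DFA with finitely many
states. -/
def IsRegularLang {σ : Type*} (L : Set (List σ)) : Prop :=
  Language.IsRegular L

/-!
A word `u # v` with `#` not in `u` determines `u` and `v`. Hence, fixing a word
`b ∈ B_j`, the map `a ↦ a # b` embeds the length-`n` words of `A_i` into a section of `L`, and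
symmetrically for `B_j`; conversely the `(n, m)`-section of `L` is covered by the images of the
products of the length-`n` words of `A_i` with the length-`m` words of `B_j`, so its size is at
most `∑_{(i,j) ∈ I} k_i k'_j` for slenderness bounds `k_i` of `A_i` and `k'_j` of `B_j`.
-/

section

variable {α : Type*} {c : α}

def sepConcat (c : α) (A B : Set (List α)) : Set (List α) :=
  {w | ∃ a ∈ A, ∃ b ∈ B, w = a ++ [c] ++ b}

/-- The section `L ∩ {u c v : u ∈ Σ₀ⁿ, v ∈ Σ₀ᵐ}`, where `Σ₀ = α \ {c}`. -/
def sepSection (c : α) (L : Set (List α)) (n m : ℕ) : Set (List α) :=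
  L ∩ {w | ∃ u v : List α, c ∉ u ∧ c ∉ v ∧ u.length = n ∧ v.length = m ∧ w = u ++ [c] ++ v}

theorem slender_iff_exists_encard_le {L : Set (List α)} :
    Slender L ↔ ∃ k : ℕ, ∀ ℓ, {w ∈ L | w.length = ℓ}.encard ≤ k := by
  simp only [Slender, Set.encard_le_coe_iff_finite_ncard_le]

theorem List.eq_of_append_singleton_append_eq {u₁ u₂ v₁ v₂ : List α}
    (hu : c ∉ u₁) (hv : c ∉ v₁) (h : u₁ ++ [c] ++ v₁ = u₂ ++ [c] ++ v₂) :
    u₁ = u₂ ∧ v₁ = v₂ := by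
  simp only [List.append_assoc, List.singleton_append] at h
  obtain ⟨rfl, -, rfl⟩ := (List.append_cons_inj_of_notMem hu hv).1 h
  exact ⟨rfl, rfl⟩

theorem encard_lengthSlice_le_sepSection_left {A B L : Set (List α)} {b : List α}
    (hA : ∀ a ∈ A, c ∉ a) (hb : b ∈ B) (hcb : c ∉ b) (hL : sepConcat c A B ⊆ L) (n : ℕ) :
    {a ∈ A | a.length = n}.encard ≤ (sepSection c L n b.length).encard := by
  have hinj : Set.InjOn (· ++ [c] ++ b) {a ∈ A | a.length = n} := fun a₁ ha₁ _ _ h =>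
    (List.eq_of_append_singleton_append_eq (hA a₁ ha₁.1) hcb h).1
  rw [← hinj.encard_image]
  refine Set.encard_le_encard ?_
  rintro _ ⟨a, ⟨ha, rfl⟩, rfl⟩
  exact ⟨hL ⟨a, ha, b, hb, rfl⟩, a, b, hA a ha, hcb, rfl, rfl, rfl⟩

theorem encard_lengthSlice_le_sepSection_right {A B L : Set (List α)} {a : List α}
    (ha : a ∈ A) (hca : c ∉ a) (hB : ∀ b ∈ B, c ∉ b) (hL : sepConcat c A B ⊆ L) (m : ℕ) :
    {b ∈ B | b.length = m}.encard ≤ (sepSection c L a.length m).encard := by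
  have hinj : Set.InjOn (a ++ [c] ++ ·) {b ∈ B | b.length = m} := fun _ _ _ _ h =>
    List.append_cancel_left h
  rw [← hinj.encard_image]
  refine Set.encard_le_encard ?_
  rintro _ ⟨b, ⟨hb, rfl⟩, rfl⟩
  exact ⟨hL ⟨a, ha, b, hb, rfl⟩, a, b, hca, hB b hb, rfl, rfl, rfl⟩

theorem sepSection_sepConcat_subset_image2 (A B : Set (List α)) (n m : ℕ) :
    sepSection c (sepConcat c A B) n m ⊆
      Set.image2 (· ++ [c] ++ ·) {a ∈ A | a.length = n} {b ∈ B | b.length = m} := by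
  rintro _ ⟨⟨a, ha, b, hb, rfl⟩, u, v, hu, hv, rfl, rfl, huv⟩
  obtain ⟨rfl, rfl⟩ := List.eq_of_append_singleton_append_eq hu hv huv.symm
  exact ⟨u, ⟨ha, rfl⟩, v, ⟨hb, rfl⟩, rfl⟩

theorem sepSection_biUnion {ι : Type*} (I : Finset ι) (L : ι → Set (List α)) (n m : ℕ) :
    sepSection c (⋃ p ∈ I, L p) n m = ⋃ p ∈ I, sepSection c (L p) n m := by
  simp only [sepSection, Set.iUnion₂_inter]

theorem encard_sepSection_biUnion_sepConcat_le {ι : Type*} (I : Finset ι)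
    (A B : ι → Set (List α)) (n m : ℕ) :
    (sepSection c (⋃ p ∈ I, sepConcat c (A p) (B p)) n m).encard ≤
      ∑ p ∈ I, {a ∈ A p | a.length = n}.encard * {b ∈ B p | b.length = m}.encard := by
  rw [sepSection_biUnion]
  refine (I.set_encard_biUnion_le _).trans (Finset.sum_le_sum fun p _ => ?_)
  calc (sepSection c (sepConcat c (A p) (B p)) n m).encard
      ≤ (Set.image2 (· ++ [c] ++ ·) {a ∈ A p | a.length = n}
          {b ∈ B p | b.length = m}).encard :=
        Set.encard_le_encard (sepSection_sepConcat_subset_image2 _ _ n m)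
    _ ≤ _ := by
        rw [← Set.image_uncurry_prod, ← Set.encard_prod]
        exact Set.encard_image_le _ _

end

theorem bounded_sections_iff_slender_general
    {σ : Type*} (hash : σ) (I : Finset (ℕ × ℕ))
    (A B : ℕ → Set (List σ))
    (hA₀ : ∀ p ∈ I, ∀ w ∈ A p.1, hash ∉ w)
    (hB₀ : ∀ p ∈ I, ∀ w ∈ B p.2, hash ∉ w)
    (hAne : ∀ p ∈ I, (A p.1).Nonempty) (hBne : ∀ p ∈ I, (B p.2).Nonempty) :
    (∃ k : ℕ, ∀ m n : ℕ,
      ((⋃ p ∈ I, {w | ∃ a ∈ A p.1, ∃ b ∈ B p.2, w = a ++ [hash] ++ b}) ∩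
        {w : List σ | ∃ u v : List σ, hash ∉ u ∧ hash ∉ v ∧
          u.length = n ∧ v.length = m ∧ w = u ++ [hash] ++ v}).Finite ∧
      ((⋃ p ∈ I, {w | ∃ a ∈ A p.1, ∃ b ∈ B p.2, w = a ++ [hash] ++ b}) ∩
        {w : List σ | ∃ u v : List σ, hash ∉ u ∧ hash ∉ v ∧
          u.length = n ∧ v.length = m ∧ w = u ++ [hash] ++ v}).ncard ≤ k) ↔
    (∀ p ∈ I, Slender (A p.1) ∧ Slender (B p.2)) := by
  set L := ⋃ p ∈ I, sepConcat hash (A p.1) (B p.2)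
  change (∃ k : ℕ, ∀ m n,
    (sepSection hash L n m).Finite ∧ (sepSection hash L n m).ncard ≤ k) ↔ _
  simp only [← Set.encard_le_coe_iff_finite_ncard_le, slender_iff_exists_encard_le]
  constructor
  · rintro ⟨k, hk⟩ p hp
    obtain ⟨a, ha⟩ := hAne p hp
    obtain ⟨b, hb⟩ := hBne p hp
    have hL : sepConcat hash (A p.1) (B p.2) ⊆ L := fun _ hw => Set.mem_biUnion hp hw
    exact ⟨⟨k, fun n => (encard_lengthSlice_le_sepSection_left (hA₀ p hp) hb (hB₀ p hp b hb)
        hL n).trans (hk _ _)⟩,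
      ⟨k, fun m => (encard_lengthSlice_le_sepSection_right ha (hA₀ p hp a ha) (hB₀ p hp)
        hL m).trans (hk _ _)⟩⟩
  · intro h
    choose! kA hkA using fun p hp => (h p hp).1
    choose! kB hkB using fun p hp => (h p hp).2
    refine ⟨∑ p ∈ I, kA p * kB p, fun m n => ?_⟩
    calc (sepSection hash L n m).encard
        ≤ ∑ p ∈ I, {a ∈ A p.1 | a.length = n}.encard * {b ∈ B p.2 | b.length = m}.encard :=
          encard_sepSection_biUnion_sepConcat_le I _ _ n m
      _ ≤ ∑ p ∈ I, (kA p * kB p : ℕ∞) :=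
          Finset.sum_le_sum fun p hp => mul_le_mul' (hkA p hp n) (hkB p hp m)
      _ = _ := by push_cast; rfl

/-- for a finite union `L = ⋃_{(i,j) ∈ I} A_i·{#}·B_j` with all `A_i, B_j`
nonempty regular languages over `Σ₀ = Σ \ {#}`, the sections
`L ∩ {u#v : u ∈ Σ₀ⁿ, v ∈ Σ₀ᵐ}` have uniformly bounded size iff all the `A_i` and `B_j`
are slender. -/
theorem bounded_sections_iff_slender
    {σ : Type*} [Fintype σ] (hash : σ) (I : Finset (ℕ × ℕ))
    (A B : ℕ → Set (List σ))
    (hA₀ : ∀ p ∈ I, ∀ w ∈ A p.1, hash ∉ w)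
    (hB₀ : ∀ p ∈ I, ∀ w ∈ B p.2, hash ∉ w)
    (hAreg : ∀ p ∈ I, IsRegularLang (A p.1)) (hBreg : ∀ p ∈ I, IsRegularLang (B p.2))
    (hAne : ∀ p ∈ I, (A p.1).Nonempty) (hBne : ∀ p ∈ I, (B p.2).Nonempty) :
    (∃ k : ℕ, ∀ m n : ℕ,
      ((⋃ p ∈ I, {w | ∃ a ∈ A p.1, ∃ b ∈ B p.2, w = a ++ [hash] ++ b}) ∩
        {w : List σ | ∃ u v : List σ, hash ∉ u ∧ hash ∉ v ∧
          u.length = n ∧ v.length = m ∧ w = u ++ [hash] ++ v}).Finite ∧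
      ((⋃ p ∈ I, {w | ∃ a ∈ A p.1, ∃ b ∈ B p.2, w = a ++ [hash] ++ b}) ∩
        {w : List σ | ∃ u v : List σ, hash ∉ u ∧ hash ∉ v ∧
          u.length = n ∧ v.length = m ∧ w = u ++ [hash] ++ v}).ncard ≤ k) ↔
    (∀ p ∈ I, Slender (A p.1) ∧ Slender (B p.2)) :=
  bounded_sections_iff_slender_general hash I A B hA₀ hB₀ hAne hBne
end

section
/- Let A = (Q, Σ, S, Δ, F) be a nondeterministic finite automaton with finite state set Q, set of initial states S, transition function Δ : Q → Σ → Set Q, and set of accepting states F. Then the finite-word language L_*(A) is NOT slender if and only if there exist states q, p₁, p₂ ∈ Q and f₁, f₂ ∈ F such that: (1) there exist w₀ ∈ Σ* and a nonempty word w ∈ Σ⁺ such that q is reachable from some initial state by a run on w₀ and q is reachable from q by a run on w; (2) there exist nonempty words u₁, u₂ ∈ Σ⁺ and an index i < min(|u₁|,|u₂|) with u₁[i] ≠ u₂[i], such that p₁ is reachable from q by a run on u₁ and p₂ is reachable from q by a run on u₂; and (3) there exist nonempty words w₁, w₂ ∈ Σ⁺ and words v₁, v₂ ∈ Σ* such that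 p₁ is reachable from p₁ by a run on w₁ and f₁ is reachable from p₁ by a run on v₁, and p₂ is reachable from p₂ by a run on w₂ and f₂ is reachable from p₂ by a run on v₂. -/
/-!
If two cycle bridges from `q` disagree at position `i`, the loops at `q`, `p₁`, `p₂` can be taken
of a common length `C > i`; for every `K` this gives the accepted words
`x W^j u₁ W₁^(K-j) v₁` and `x W^j u₂ W₂^(K-j) v₂`, `j ≤ K`, of two fixed lengths. Two indices
`j < j'` giving the same pair would force `u₁[i] = W[i] = u₂[i]`, so one of the two lengths
carries at least `√(K+1)` words.

Conversely, a run on an accepted word of length `≥ 2|Q|` repeats a state among its first and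
among its last `|Q| + 1` positions, so the word splits as `x m y` with `|x|, |y| ≤ |Q|` and `m` a
cycle bridge from some state `q`. If bridges from the same state never disagree, `m` is determined
by `q` and its length, so there are at most as many words of each length as triples `(x, q, y)`.
-/

theorem Set.ncard_le_ncard_of_rel {α β : Type*} {s : Set α} {t : Set β} (R : α → β → Prop)
    (ht : t.Finite) (hex : ∀ a ∈ s, ∃ b ∈ t, R a b)
    (hinj : ∀ a ∈ s, ∀ a' ∈ s, ∀ b, R a b → R a' b → a = a') : s.ncard ≤ t.ncard := by
  choose f hft hR using hex
  have : Finite t := ht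
  rw [← Nat.card_coe_set_eq, ← Nat.card_coe_set_eq]
  refine Nat.card_le_card_of_injective (fun a : s => ⟨f a a.2, hft a a.2⟩) fun a a' h => ?_
  have hfa : f a a.2 = f a' a'.2 := congrArg Subtype.val h
  exact Subtype.ext (hinj a a.2 a' a'.2 _ (hR a a.2) (hfa ▸ hR a' a'.2))

section Slender

variable {σ : Type*} {L : Set (List σ)}

theorem slender_of_eventually_ncard_le [Finite σ] (N k : ℕ)
    (h : ∀ ℓ ≥ N, {w ∈ L | w.length = ℓ}.ncard ≤ k) : Slender L := by
  refine ⟨max k {w : List σ | w.length < N}.ncard, fun ℓ => ⟨?_, ?_⟩⟩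
  · exact (List.finite_length_eq σ ℓ).subset fun w hw => hw.2
  · rcases lt_or_ge ℓ N with hℓ | hℓ
    · refine le_max_of_le_right (Set.ncard_le_ncard ?_ (List.finite_length_lt σ N))
      rintro w ⟨-, rfl⟩
      exact hℓ
    · exact le_max_of_le_left (h ℓ hℓ)

theorem not_slender_of_injOn_pairs
    (h : ∀ K, ∃ (ℓ₁ ℓ₂ : ℕ) (f : ℕ → List σ × List σ), Set.InjOn f (Finset.range (K + 1)) ∧
      ∀ j ≤ K, (f j).1 ∈ L ∧ (f j).1.length = ℓ₁ ∧ (f j).2 ∈ L ∧ (f j).2.length = ℓ₂) :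
    ¬ Slender L := by
  rintro ⟨k, hk⟩
  obtain ⟨ℓ₁, ℓ₂, f, hinj, hf⟩ := h (k * k)
  have hcard := Set.ncard_le_ncard_of_injOn f
    (t := {w ∈ L | w.length = ℓ₁} ×ˢ {w ∈ L | w.length = ℓ₂})
    (fun j hj => by
      obtain ⟨h₁, h₁', h₂, h₂'⟩ := hf j (by simpa [Nat.lt_succ_iff] using hj)
      exact ⟨⟨h₁, h₁'⟩, h₂, h₂'⟩)
    hinj ((hk ℓ₁).1.prod (hk ℓ₂).1)
  rw [Set.ncard_coe_finset, Finset.card_range, Set.ncard_prod] at hcard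
  have := Nat.mul_le_mul (hk ℓ₁).2 (hk ℓ₂).2
  omega

end Slender

theorem List.getElem_eq_of_append_flatten_replicate_eq {α : Type*} {x W u t s : List α}
    {a b : ℕ} (hab : a < b)
    (h : x ++ ((replicate a W).flatten ++ (u ++ t)) = x ++ ((replicate b W).flatten ++ s))
    {i : ℕ} (hu : i < u.length) (hW : i < W.length) : u[i] = W[i] := by
  obtain ⟨c, rfl⟩ : ∃ c, b = a + (c + 1) := ⟨b - a - 1, by omega⟩
  simp only [replicate_add, flatten_append, replicate_succ, flatten_cons, append_assoc,
    append_cancel_left_eq] at h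
  have hi := congrArg (·[i]?) h
  simpa [getElem?_append_left hu, getElem?_append_left hW, getElem?_eq_getElem hu,
    getElem?_eq_getElem hW] using hi

theorem Fintype.exists_window_map_eq {σ : Type*} [Fintype σ] (r : ℕ → σ) (k : ℕ) :
    ∃ i j, k ≤ i ∧ i < j ∧ j ≤ k + Fintype.card σ ∧ r i = r j := by
  obtain ⟨i, j, hij, h⟩ := Fintype.exists_ne_map_eq_of_card_lt
    (fun i : Fin (Fintype.card σ + 1) => r (k + i)) (by simp)
  rcases lt_or_gt_of_ne (Fin.val_ne_of_ne hij) with hlt | hlt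
  · exact ⟨k + i, k + j, by omega, by omega, by omega, h⟩
  · exact ⟨k + j, k + i, by omega, by omega, by omega, h.symm⟩

namespace NFA

variable {α σ : Type*} (M : NFA α σ)

def OnCycle (q : σ) : Prop := ∃ w ≠ [], q ∈ M.evalFrom {q} w

def IsCycleBridge (q : σ) (u : List α) : Prop :=
  (∃ w, q ∈ M.evalFrom M.start w) ∧ M.OnCycle q ∧
    ∃ p ∈ M.evalFrom {q} u, M.OnCycle p ∧ (M.acceptsFrom {p}).Nonempty

variable {M}

theorem mem_evalFrom_append {S : Set σ} {q t : σ} {x y : List α} (hq : q ∈ M.evalFrom S x)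
    (ht : t ∈ M.evalFrom {q} y) : t ∈ M.evalFrom S (x ++ y) := by
  rw [evalFrom_append, mem_evalFrom_iff_exists]
  exact ⟨q, hq, ht⟩

theorem mem_evalFrom_flatten_replicate {q : σ} {w : List α} (h : q ∈ M.evalFrom {q} w) (k : ℕ) :
    q ∈ M.evalFrom {q} (List.replicate k w).flatten := by
  induction k with
  | zero => simp
  | succ k ih => simpa only [List.replicate_succ, List.flatten_cons] using mem_evalFrom_append h ih

theorem OnCycle.exists_pos_forall_dvd {q : σ} (h : M.OnCycle q) :
    ∃ d > 0, ∀ C, d ∣ C → ∃ W : List α, W.length = C ∧ q ∈ M.evalFrom {q} W := by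
  obtain ⟨w, hw, hq⟩ := h
  refine ⟨w.length, List.length_pos_iff.mpr hw, ?_⟩
  rintro _ ⟨k, rfl⟩
  exact ⟨(List.replicate k w).flatten, by simp [mul_comm], mem_evalFrom_flatten_replicate hq k⟩

theorem exists_run {s t : σ} {x : List α} (h : t ∈ M.evalFrom {s} x) :
    ∃ r : ℕ → σ, r 0 = s ∧ r x.length = t ∧
      ∀ i j, i ≤ j → j ≤ x.length → r j ∈ M.evalFrom {r i} ((x.drop i).take (j - i)) := by
  induction x generalizing s with
  | nil =>
    exact ⟨fun _ => s, rfl, by simpa using h.symm, fun _ _ _ _ => by simp⟩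
  | cons a x ih =>
    rw [evalFrom_cons, stepSet_singleton, mem_evalFrom_iff_exists] at h
    obtain ⟨s', hs', ht⟩ := h
    obtain ⟨r, hr0, hrt, hr⟩ := ih ht
    refine ⟨fun | 0 => s | i + 1 => r i, rfl, hrt, ?_⟩
    rintro (_ | i) (_ | j) hij hj
    · simp
    · have := hr 0 j (Nat.zero_le j) (by simpa using hj)
      simp only [List.drop_zero, Nat.sub_zero, List.take_succ_cons, evalFrom_cons,
        stepSet_singleton] at this ⊢
      rw [mem_evalFrom_iff_exists]
      exact ⟨s', hs', hr0 ▸ this⟩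
    · omega
    · simpa using hr i j (by omega) (by simpa using hj)

theorem exists_split_loop [Fintype σ] {s t : σ} {x : List α} (h : t ∈ M.evalFrom {s} x)
    {k : ℕ} (hk : k + Fintype.card σ ≤ x.length) :
    ∃ q a b c, x = a ++ b ++ c ∧ k ≤ a.length ∧ a.length + b.length ≤ k + Fintype.card σ ∧
      b ≠ [] ∧ q ∈ M.evalFrom {s} a ∧ q ∈ M.evalFrom {q} b ∧ t ∈ M.evalFrom {q} c := by
  obtain ⟨r, hr0, hrt, hr⟩ := exists_run h
  obtain ⟨i, j, hki, hij, hjk, hrij⟩ := Fintype.exists_window_map_eq r k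
  refine ⟨r i, x.take i, (x.drop i).take (j - i), x.drop j, ?_, ?_, ?_, ?_, ?_, ?_, ?_⟩
  · have hdrop : x.drop j = (x.drop i).drop (j - i) := by
      rw [List.drop_drop, Nat.add_sub_cancel' hij.le]
    rw [List.append_assoc, hdrop, List.take_append_drop, List.take_append_drop]
  · rw [List.length_take]; omega
  · rw [List.length_take, List.length_take, List.length_drop]; omega
  · rw [← List.length_pos_iff, List.length_take, List.length_drop]; omega
  · simpa [hr0] using hr 0 i (Nat.zero_le i) (by omega)
  · simpa [hrij] using hr i j hij.le (by omega)
  · have := hr j x.length (by omega) le_rfl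
    rwa [List.take_of_length_le (by simp), hrt, ← hrij] at this

theorem exists_cycleBridge_of_mem_accepts [Fintype σ] {u : List α} (hu : u ∈ M.accepts)
    (hlen : 2 * Fintype.card σ ≤ u.length) :
    ∃ x m y q, u = x ++ m ++ y ∧ x.length ≤ Fintype.card σ ∧ y.length ≤ Fintype.card σ ∧
      M.IsCycleBridge q m := by
  obtain ⟨f, hf, hu⟩ := mem_accepts.mp hu
  obtain ⟨s, hs, hu⟩ := mem_evalFrom_iff_exists.mp hu
  obtain ⟨q, x, w, z, rfl, -, hxw, hw, hx, hq, hz⟩ := exists_split_loop hu (k := 0) (by omega)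
  have hwz : f ∈ M.evalFrom {q} (w ++ z) := mem_evalFrom_append hq hz
  have hlen' : (w ++ z).length - Fintype.card σ + Fintype.card σ ≤ (w ++ z).length := by
    simp only [List.length_append] at hlen ⊢
    omega
  obtain ⟨p, m, w', y, hwz_eq, hm_len, -, hw', hm, hp, hy⟩ := exists_split_loop hwz hlen'
  refine ⟨x, m, w' ++ y, q, by rw [List.append_assoc x w z, hwz_eq]; simp, by omega, ?_, ?_⟩
  · have := congrArg List.length hwz_eq
    simp only [List.length_append] at this hm_len ⊢
    omega
  · exact ⟨⟨x, mem_evalFrom_iff_exists.mpr ⟨s, hs, hx⟩⟩, ⟨w, hw, hq⟩, p, hm, ⟨w', hw', hp⟩,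
      y, f, hf, hy⟩

theorem flatten_replicate_mem_accepts {q p : σ} {x W u W' v : List α}
    (hx : q ∈ M.evalFrom M.start x) (hW : q ∈ M.evalFrom {q} W) (hu : p ∈ M.evalFrom {q} u)
    (hW' : p ∈ M.evalFrom {p} W') (hv : v ∈ M.acceptsFrom {p}) (j k : ℕ) :
    x ++ ((List.replicate j W).flatten ++ (u ++ ((List.replicate k W').flatten ++ v))) ∈
      M.accepts := by
  obtain ⟨f, hf, hv⟩ := hv
  exact ⟨f, hf, mem_evalFrom_append hx <|
    mem_evalFrom_append (mem_evalFrom_flatten_replicate hW j) <| mem_evalFrom_append hu <|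
    mem_evalFrom_append (mem_evalFrom_flatten_replicate hW' k) hv⟩

theorem not_slender_accepts_of_cycleBridges {q : σ} {u₁ u₂ : List α}
    (h₁ : M.IsCycleBridge q u₁) (h₂ : M.IsCycleBridge q u₂) {i : ℕ} (hi₁ : i < u₁.length)
    (hi₂ : i < u₂.length) (hne : u₁[i] ≠ u₂[i]) : ¬ Slender M.accepts := by
  obtain ⟨⟨x, hx⟩, hq, p₁, hp₁, hc₁, v₁, hv₁⟩ := h₁
  obtain ⟨-, -, p₂, hp₂, hc₂, v₂, hv₂⟩ := h₂
  obtain ⟨d, hd, hloop⟩ := hq.exists_pos_forall_dvd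
  obtain ⟨d₁, hd₁, hloop₁⟩ := hc₁.exists_pos_forall_dvd
  obtain ⟨d₂, hd₂, hloop₂⟩ := hc₂.exists_pos_forall_dvd
  set C := (i + 1) * (d * d₁ * d₂)
  obtain ⟨W, hWC, hW⟩ := hloop C (Dvd.intro ((i + 1) * d₁ * d₂) (by ring))
  obtain ⟨W₁, hW₁C, hW₁⟩ := hloop₁ C (Dvd.intro ((i + 1) * d * d₂) (by ring))
  obtain ⟨W₂, hW₂C, hW₂⟩ := hloop₂ C (Dvd.intro ((i + 1) * d * d₁) (by ring))
  have hiC : i < C := Nat.lt_of_lt_of_le i.lt_succ_self (Nat.le_mul_of_pos_right _ (by positivity))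
  refine not_slender_of_injOn_pairs fun K => ?_
  let f (j : ℕ) : List α × List α :=
    (x ++ ((List.replicate j W).flatten ++ (u₁ ++ ((List.replicate (K - j) W₁).flatten ++ v₁))),
      x ++ ((List.replicate j W).flatten ++ (u₂ ++ ((List.replicate (K - j) W₂).flatten ++ v₂))))
  have hf_ne : ∀ a b, a < b → f a ≠ f b := by
    intro a b hab heq
    rw [Prod.mk.injEq] at heq
    have hiW : i < W.length := hWC ▸ hiC
    exact hne <| (List.getElem_eq_of_append_flatten_replicate_eq hab heq.1 hi₁ hiW).trans
      (List.getElem_eq_of_append_flatten_replicate_eq hab heq.2 hi₂ hiW).symm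
  refine ⟨x.length + K * C + u₁.length + v₁.length, x.length + K * C + u₂.length + v₂.length,
    f, fun a _ b _ hab => ?_, fun j hj => ⟨flatten_replicate_mem_accepts hx hW hp₁ hW₁ hv₁ _ _,
      ?_, flatten_replicate_mem_accepts hx hW hp₂ hW₂ hv₂ _ _, ?_⟩⟩
  · by_contra hab'
    rcases lt_or_gt_of_ne hab' with hlt | hlt
    exacts [hf_ne a b hlt hab, hf_ne b a hlt hab.symm]
  all_goals
    have hsplit : j * C + (K - j) * C = K * C := by rw [← add_mul, Nat.add_sub_cancel' hj]
    simp only [f, List.length_append, List.length_flatten, List.map_replicate, List.sum_replicate,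
      smul_eq_mul, hWC, hW₁C, hW₂C]
    omega

theorem slender_accepts_of_cycleBridges_agree [Fintype α] [Fintype σ]
    (h : ∀ q u₁ u₂, M.IsCycleBridge q u₁ → M.IsCycleBridge q u₂ →
      ∀ i (h₁ : i < u₁.length) (h₂ : i < u₂.length), u₁[i] = u₂[i]) :
    Slender M.accepts := by
  set n := Fintype.card σ
  let T : Set (List α × σ × List α) := {x | x.length ≤ n} ×ˢ (Set.univ ×ˢ {y | y.length ≤ n})
  have hT : T.Finite :=
    (List.finite_length_le α n).prod (Set.finite_univ.prod (List.finite_length_le α n))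
  refine slender_of_eventually_ncard_le (2 * n) T.ncard fun ℓ hℓ => Set.ncard_le_ncard_of_rel
    (fun u z => ∃ m, u = z.1 ++ m ++ z.2.2 ∧ M.IsCycleBridge z.2.1 m) hT ?_ ?_
  · rintro u ⟨hu, rfl⟩
    obtain ⟨x, m, y, q, rfl, hx, hy, hm⟩ := exists_cycleBridge_of_mem_accepts hu hℓ
    exact ⟨(x, q, y), ⟨hx, trivial, hy⟩, m, rfl, hm⟩
  · rintro u ⟨-, hu⟩ u' ⟨-, hu'⟩ ⟨x, q, y⟩ ⟨m, rfl, hm⟩ ⟨m', rfl, hm'⟩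
    have hlen : m.length = m'.length := by
      simp only [List.length_append] at hu hu'
      omega
    rw [List.ext_getElem hlen (h q m m' hm hm')]

end NFA

/-- characterization of non-slenderness of the language of an NFA.
`L_*(A)` is not slender iff there are a state `q` reachable from an initial state and
lying on a nonempty cycle, two runs from `q` on words `u₁, u₂` differing at some common
position and leading to states `p₁, p₂`, each of which lies on a nonempty cycle and can
reach an accepting state. -/
theorem not_slender_iff_two_branching_cycles
    {α Q : Type*} [Fintype α] [Fintype Q] (M : NFA α Q) :
    ¬ Slender {w : List α | w ∈ M.accepts} ↔
    ∃ q p₁ p₂ f₁ f₂ : Q, f₁ ∈ M.accept ∧ f₂ ∈ M.accept ∧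
      (∃ (w₀ w : List α), w ≠ [] ∧
        q ∈ M.evalFrom M.start w₀ ∧ q ∈ M.evalFrom {q} w) ∧
      (∃ (u₁ u₂ : List α), u₁ ≠ [] ∧ u₂ ≠ [] ∧
        (∃ (i : ℕ) (h₁ : i < u₁.length) (h₂ : i < u₂.length),
          u₁.get ⟨i, h₁⟩ ≠ u₂.get ⟨i, h₂⟩) ∧
        p₁ ∈ M.evalFrom {q} u₁ ∧ p₂ ∈ M.evalFrom {q} u₂) ∧
      (∃ (w₁ w₂ v₁ v₂ : List α), w₁ ≠ [] ∧ w₂ ≠ [] ∧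
        p₁ ∈ M.evalFrom {p₁} w₁ ∧ f₁ ∈ M.evalFrom {p₁} v₁ ∧
        p₂ ∈ M.evalFrom {p₂} w₂ ∧ f₂ ∈ M.evalFrom {p₂} v₂) := by
  simp only [List.get_eq_getElem]
  constructor
  · intro hns
    by_contra H
    refine hns (NFA.slender_accepts_of_cycleBridges_agree fun q u₁ u₂ h₁ h₂ i hi₁ hi₂ => ?_)
    by_contra hne
    obtain ⟨⟨w₀, hw₀⟩, ⟨w, hw, hq⟩, p₁, hp₁, ⟨w₁, hw₁, hc₁⟩, v₁, f₁, hf₁, hv₁⟩ := h₁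
    obtain ⟨-, -, p₂, hp₂, ⟨w₂, hw₂, hc₂⟩, v₂, f₂, hf₂, hv₂⟩ := h₂
    exact H ⟨q, p₁, p₂, f₁, f₂, hf₁, hf₂, ⟨w₀, w, hw, hw₀, hq⟩,
      ⟨u₁, u₂, List.ne_nil_of_length_pos (by omega), List.ne_nil_of_length_pos (by omega),
        ⟨i, hi₁, hi₂, hne⟩, hp₁, hp₂⟩, ⟨w₁, w₂, v₁, v₂, hw₁, hw₂, hc₁, hv₁, hc₂, hv₂⟩⟩
  · rintro ⟨q, p₁, p₂, f₁, f₂, hf₁, hf₂, ⟨w₀, w, hw, hw₀, hq⟩,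
      ⟨u₁, u₂, -, -, ⟨i, hi₁, hi₂, hne⟩, hp₁, hp₂⟩, ⟨w₁, w₂, v₁, v₂, hw₁, hw₂, hc₁, hv₁, hc₂, hv₂⟩⟩
    exact NFA.not_slender_accepts_of_cycleBridges
      ⟨⟨w₀, hw₀⟩, ⟨w, hw, hq⟩, p₁, hp₁, ⟨w₁, hw₁, hc₁⟩, v₁, f₁, hf₁, hv₁⟩
      ⟨⟨w₀, hw₀⟩, ⟨w, hw, hq⟩, p₂, hp₂, ⟨w₂, hw₂, hc₂⟩, v₂, f₂, hf₂, hv₂⟩ hi₁ hi₂ hne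
end

section
/- Let Σ be an alphabet, let I be a finite index set, and for each i ∈ I let X_i and Z_i be finite languages over Σ and w_i ∈ Σ* a finite word. Then the language ⋃_{i∈I} X_i·{w_i}*·Z_i (where {w_i}* denotes the set of all finite powers of the word w_i, and · denotes concatenation of languages) is slender. -/
/-- a finite union of languages of the form `X_i · {w_i}* · Z_i` with
`X_i, Z_i` finite languages and `w_i` a fixed word, is slender.  Here `{w_i}*` is the
set of all finite repetitions `w_iⁿ` of `w_i`. -/
theorem slender_finite_union_finite_power_finite
    {σ : Type*} {ι : Type*} (I : Finset ι)
    (X Z : ι → Set (List σ)) (w : ι → List σ)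
    (hX : ∀ i ∈ I, (X i).Finite) (hZ : ∀ i ∈ I, (Z i).Finite) :
    Slender (⋃ i ∈ I,
      {x : List σ | ∃ a ∈ X i, ∃ n : ℕ, ∃ z ∈ Z i,
        x = a ++ (List.replicate n (w i)).flatten ++ z}) := by
  classical
  refine ⟨∑ i ∈ I.attach, ((hX i i.2).toFinset.card * (hZ i i.2).toFinset.card), fun ℓ => ?_⟩
  set T : Finset (List σ) := I.attach.biUnion (fun i =>
    ((hX i i.2).toFinset ×ˢ (hZ i i.2).toFinset).image
      (fun p => p.1 ++ (List.replicate ((ℓ - p.1.length - p.2.length) / (w i).length)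
        (w i)).flatten ++ p.2)) with hT
  have hsub : {x ∈ ⋃ i ∈ I,
      {x : List σ | ∃ a ∈ X i, ∃ n : ℕ, ∃ z ∈ Z i,
        x = a ++ (List.replicate n (w i)).flatten ++ z} | x.length = ℓ} ⊆ ↑T := by
    rintro x ⟨hxL, hxlen⟩
    simp only [Set.mem_iUnion, Set.mem_setOf_eq] at hxL
    obtain ⟨i, hi, a, ha, n, z, hz, rfl⟩ := hxL
    have hlen : a.length + n * (w i).length + z.length = ℓ := by
      simpa [List.length_flatten, Function.comp, Nat.mul_comm, add_assoc] using hxlen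
    have key : (List.replicate ((ℓ - a.length - z.length) / (w i).length) (w i)).flatten
        = (List.replicate n (w i)).flatten := by
      rcases Nat.eq_zero_or_pos (w i).length with h0 | hpos
      · rw [List.length_eq_zero_iff.mp h0]
        simp
      · have : ℓ - a.length - z.length = n * (w i).length := by omega
        rw [this, Nat.mul_div_cancel _ hpos]
    have hmem : a ++ (List.replicate n (w i)).flatten ++ z ∈ T := by
      rw [hT]
      refine Finset.mem_biUnion.mpr ⟨⟨i, hi⟩, Finset.mem_attach _ _, ?_⟩
      refine Finset.mem_image.mpr ⟨(a, z), ?_, ?_⟩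
      · simp [Finset.mem_product, Set.Finite.mem_toFinset, ha, hz]
      · simp only [key]
    exact hmem
  have hfin : {x ∈ ⋃ i ∈ I,
      {x : List σ | ∃ a ∈ X i, ∃ n : ℕ, ∃ z ∈ Z i,
        x = a ++ (List.replicate n (w i)).flatten ++ z} | x.length = ℓ}.Finite :=
    Set.Finite.subset T.finite_toSet hsub
  refine ⟨hfin, ?_⟩
  calc _ ≤ (↑T : Set (List σ)).ncard := Set.ncard_le_ncard hsub T.finite_toSet
    _ = T.card := Set.ncard_coe_finset T
    _ ≤ ∑ i ∈ I.attach, (((hX i i.2).toFinset ×ˢ (hZ i i.2).toFinset).image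
      (fun p => p.1 ++ (List.replicate ((ℓ - p.1.length - p.2.length) / (w i).length)
        (w i)).flatten ++ p.2)).card := Finset.card_biUnion_le
    _ ≤ ∑ i ∈ I.attach, ((hX i i.2).toFinset.card * (hZ i i.2).toFinset.card) := by
        refine Finset.sum_le_sum fun i _ => ?_
        calc _ ≤ ((hX i i.2).toFinset ×ˢ (hZ i i.2).toFinset).card :=
            Finset.card_image_le
          _ = _ := Finset.card_product _ _
end

section
/- Let A = (Q, Σ, S, Δ, F) be a nondeterministic finite automaton with finite state set Q that is trimmed with respect to the Büchi condition, i.e., for every state q ∈ Q there exists a nonempty finite word u such that some accepting state in F is reachable from q by a run on u. Then every finite word w ∈ L_*(A) is a prefix of some ω-word in L_ω(A), i.e., there exists an ω-word α ∈ L_ω(A) with α(i) = w[i] for all i < |w|. -/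
/-- Büchi acceptance of an ω-word by an NFA: there is a run starting in an initial
state, following the transition function, and visiting accepting states infinitely
often. -/
def BuchiAccepts {α Q : Type*} (M : NFA α Q) (w : ℕ → α) : Prop :=
  ∃ r : ℕ → Q, r 0 ∈ M.start ∧ (∀ n, r (n + 1) ∈ M.step (r n) (w n)) ∧
    ∀ n, ∃ m, n ≤ m ∧ r m ∈ M.accept

/-- An automaton is trimmed w.r.t. the Büchi condition if from every state some
accepting state is reachable by a nonempty word. -/
def TrimmedBuchi {α Q : Type*} (M : NFA α Q) : Prop :=
  ∀ q : Q, ∃ u : List α, u ≠ [] ∧ ∃ f ∈ M.accept, f ∈ M.evalFrom {q} u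

section Aux

variable {α Q : Type*} (M : NFA α Q)

/-- A path labelled by letters and states, starting from a state. -/
def IsPath : Q → List (α × Q) → Prop
  | _, [] => True
  | q, (a, p) :: l => p ∈ M.step q a ∧ IsPath p l

/-- Last state of a path, defaulting to the starting state. -/
def lastState : Q → List (α × Q) → Q
  | q, [] => q
  | _, (_, p) :: l => lastState p l

@[simp] lemma lastState_nil (q : Q) : lastState q ([] : List (α × Q)) = q := rfl

@[simp] lemma lastState_cons (q : Q) (a : α) (p : Q) (l : List (α × Q)) :
    lastState q ((a, p) :: l) = lastState p l := rfl

lemma stepSet_mono' {S T : Set Q} (h : S ⊆ T) (a : α) : M.stepSet S a ⊆ M.stepSet T a := by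
  intro x hx
  rw [NFA.mem_stepSet] at hx ⊢
  obtain ⟨s, hs, hx⟩ := hx
  exact ⟨s, h hs, hx⟩

lemma evalFrom_mono' {S T : Set Q} (h : S ⊆ T) (u : List α) :
    M.evalFrom S u ⊆ M.evalFrom T u := by
  induction u generalizing S T with
  | nil => simpa using h
  | cons a u ih => exact ih (stepSet_mono' M h a)

lemma evalFrom_exists_singleton {S : Set Q} {u : List α} {f : Q}
    (h : f ∈ M.evalFrom S u) : ∃ s ∈ S, f ∈ M.evalFrom {s} u := by
  induction u generalizing S with
  | nil => exact ⟨f, h, rfl⟩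
  | cons a u ih =>
    have h' : f ∈ M.evalFrom (M.stepSet S a) u := h
    obtain ⟨t, ht, hf⟩ := ih h'
    rw [NFA.mem_stepSet] at ht
    obtain ⟨s, hs, hts⟩ := ht
    refine ⟨s, hs, ?_⟩
    show f ∈ M.evalFrom (M.stepSet {s} a) u
    refine evalFrom_mono' M ?_ u hf
    intro x hx
    rw [Set.mem_singleton_iff] at hx
    subst hx
    rw [NFA.mem_stepSet]
    exact ⟨s, rfl, hts⟩

lemma path_of_evalFrom {q f : Q} {u : List α}
    (h : f ∈ M.evalFrom {q} u) :
    ∃ l : List (α × Q), l.map Prod.fst = u ∧ IsPath M q l ∧ lastState q l = f := by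
  induction u generalizing q with
  | nil =>
    refine ⟨[], rfl, trivial, ?_⟩
    simpa using h.symm
  | cons a u ih =>
    have h' : f ∈ M.evalFrom (M.stepSet {q} a) u := h
    obtain ⟨t, ht, hf⟩ := evalFrom_exists_singleton M h'
    rw [NFA.mem_stepSet] at ht
    obtain ⟨s, hs, hts⟩ := ht
    rw [Set.mem_singleton_iff] at hs; subst hs
    obtain ⟨l, hmap, hpath, hlast⟩ := ih hf
    exact ⟨(a, t) :: l, by simp [hmap], ⟨hts, hpath⟩, by simpa using hlast⟩

variable (ext : Q → List (α × Q))

/-- One step of the infinite-run machine: consume the head of the pending path,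
refilling it via `ext` when it runs out. -/
def nextSt : Q × List (α × Q) → Q × List (α × Q)
  | (q, []) => (q, ext q)
  | (_, (_, p) :: []) => (p, ext p)
  | (_, (_, p) :: l) => (p, l)

/-- Invariant of the machine. -/
def MachInv (p : Q × List (α × Q)) : Prop :=
  p.2 ≠ [] ∧ IsPath M p.1 p.2 ∧ lastState p.1 p.2 ∈ M.accept

variable {M ext}

lemma inv_nextSt (hne : ∀ q, ext q ≠ []) (hpath : ∀ q, IsPath M q (ext q))
    (hacc : ∀ q, lastState q (ext q) ∈ M.accept)
    {p : Q × List (α × Q)} (h : MachInv M p) : MachInv M (nextSt ext p) := by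
  obtain ⟨q, l⟩ := p
  match l with
  | [] => exact absurd rfl h.1
  | (b, p') :: [] => exact ⟨hne p', hpath p', hacc p'⟩
  | (b, p') :: x :: l' =>
    refine ⟨by simp [nextSt], h.2.1.2, ?_⟩
    have := h.2.2
    simpa [nextSt] using this

lemma step_nextSt {p : Q × List (α × Q)} (h : MachInv M p)
    {x : α × Q} {l' : List (α × Q)} (hx : p.2 = x :: l') :
    (nextSt ext p).1 ∈ M.step p.1 x.1 := by
  obtain ⟨q, l⟩ := p
  simp only at hx
  subst hx
  obtain ⟨b, p'⟩ := x
  match l' with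
  | [] => exact h.2.1.1
  | y :: l'' => exact h.2.1.1

lemma iterate_nextSt_last : ∀ (k : ℕ) (p : Q × List (α × Q)), MachInv M p →
    p.2.length = k → ((nextSt ext)^[k] p).1 = lastState p.1 p.2 := by
  intro k
  induction k with
  | zero =>
    rintro ⟨q, l⟩ h hl
    exact absurd (List.length_eq_zero_iff.mp hl) h.1
  | succ k ih =>
    rintro ⟨q, l⟩ h hl
    match l with
    | (b, p') :: [] =>
      have hk : k = 0 := by simpa using hl
      subst hk
      simp [nextSt]
    | (b, p') :: x :: l' =>
      have h1 : nextSt ext (q, (b, p') :: x :: l') = (p', x :: l') := rfl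
      rw [Function.iterate_succ_apply, h1]
      have hinv : MachInv M (p', x :: l') := ⟨by simp, h.2.1.2, h.2.2⟩
      rw [ih _ hinv (by simpa using hl)]
      rfl

lemma nextSt_cons (q : Q) (x : α × Q) (l : List (α × Q)) (hl : l ≠ []) :
    nextSt ext (q, x :: l) = (x.2, l) := by
  obtain ⟨b, p⟩ := x
  match l with
  | y :: l' => rfl


end Aux

/-- for an automaton trimmed w.r.t. the Büchi condition, every finite word
in `L_*(A)` is a prefix of some ω-word in `L_ω(A)`. -/
theorem accepted_word_is_prefix_of_buchi_word
    {α Q : Type*} [Fintype α] [Fintype Q] (M : NFA α Q)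
    (htrim : TrimmedBuchi M) :
    ∀ w ∈ M.accepts, ∃ a : ℕ → α, BuchiAccepts M a ∧
      ∀ (i : ℕ) (h : i < w.length), a i = w.get ⟨i, h⟩ := by
  intro w hw
  rw [NFA.mem_accepts] at hw
  obtain ⟨f₀, hf₀acc, hf₀⟩ := hw
  obtain ⟨s, hs, hsf⟩ := evalFrom_exists_singleton M hf₀
  obtain ⟨l₀, hl₀map, hl₀path, hl₀last⟩ := path_of_evalFrom M hsf
  have hext : ∀ q : Q, ∃ l : List (α × Q), l ≠ [] ∧ IsPath M q l ∧ lastState q l ∈ M.accept := by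
    intro q
    obtain ⟨u, hu, f, hf, hfe⟩ := htrim q
    obtain ⟨l, hmap, hp, hl⟩ := path_of_evalFrom M hfe
    refine ⟨l, ?_, hp, hl ▸ hf⟩
    rintro rfl
    exact hu hmap.symm
  choose ext hne hpath hacc using hext
  haveI : Inhabited α := ⟨((ext s).head (hne s)).1⟩
  haveI : Inhabited Q := ⟨s⟩
  obtain ⟨pend0, h0inv, hpend0⟩ :
      ∃ p, MachInv M (s, p) ∧ (l₀ ≠ [] → p = l₀) := by
    by_cases hl0 : l₀ = []
    · subst hl0
      exact ⟨ext s, ⟨hne s, hpath s, hacc s⟩, fun h => absurd rfl h⟩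
    · exact ⟨l₀, ⟨hl0, hl₀path, hl₀last ▸ hf₀acc⟩, fun _ => rfl⟩
  set next := nextSt ext with hnextdef
  set σ : ℕ → Q × List (α × Q) := fun n => next^[n] (s, pend0) with hσ
  have hσ0 : σ 0 = (s, pend0) := rfl
  have hσsucc : ∀ n, σ (n + 1) = next (σ n) := by
    intro n
    simp only [hσ]
    exact Function.iterate_succ_apply' next n _
  have hinv : ∀ n, MachInv M (σ n) := by
    intro n
    induction n with
    | zero => exact h0inv
    | succ n ih =>
      rw [hσsucc]
      exact inv_nextSt hne hpath hacc ih
  refine ⟨fun n => ((σ n).2.headI).1, ⟨fun n => (σ n).1, ?_, ?_, ?_⟩, ?_⟩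
  · show (σ 0).1 ∈ M.start
    rw [hσ0]; exact hs
  · intro n
    show (σ (n + 1)).1 ∈ M.step (σ n).1 ((σ n).2.headI).1
    obtain ⟨x, l', hx⟩ := List.exists_cons_of_ne_nil (hinv n).1
    have h1 : (σ n).2.headI.1 = x.1 := by rw [hx]; rfl
    rw [h1, hσsucc]
    exact step_nextSt (hinv n) hx
  · intro n
    refine ⟨(σ n).2.length + n, Nat.le_add_left _ _, ?_⟩
    show (σ ((σ n).2.length + n)).1 ∈ M.accept
    have h1 : σ ((σ n).2.length + n) = next^[(σ n).2.length] (σ n) := by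
      simp only [hσ]
      exact Function.iterate_add_apply next _ n _
    rw [h1, iterate_nextSt_last _ (σ n) (hinv n) rfl]
    exact (hinv n).2.2
  · intro i hi
    show ((σ i).2.headI).1 = w.get ⟨i, hi⟩
    have hlen : w.length = l₀.length := by
      rw [← hl₀map, List.length_map]
    have hl0ne : l₀ ≠ [] := by
      intro h
      rw [h] at hlen
      simp [hlen] at hi
    have hpend : ∀ j, j < l₀.length → (σ j).2 = l₀.drop j := by
      intro j
      induction j with
      | zero =>
        intro _
        rw [hσ0]
        exact hpend0 hl0ne
      | succ j ih =>
        intro hj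
        have hj' : j < l₀.length := Nat.lt_of_succ_lt hj
        have hdrop : l₀.drop j = l₀[j] :: l₀.drop (j + 1) :=
          List.drop_eq_getElem_cons hj'
        have hdne : l₀.drop (j + 1) ≠ [] := by
          intro h
          have := congrArg List.length h
          simp only [List.length_drop, List.length_nil] at this
          omega
        have hσj : σ j = ((σ j).1, l₀[j] :: l₀.drop (j + 1)) := by
          rw [← hdrop, ← ih hj']
        rw [hσsucc, hσj, hnextdef, nextSt_cons _ _ _ hdne]
    have hilt : i < l₀.length := hlen ▸ hi
    have h1 : (σ i).2 = l₀[i] :: l₀.drop (i + 1) := by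
      rw [hpend i hilt, List.drop_eq_getElem_cons hilt]
    rw [h1]
    show (l₀[i]).1 = w.get ⟨i, hi⟩
    have : w.get ⟨i, hi⟩ = (l₀.map Prod.fst)[i]'(by simpa using hilt) := by
      simp only [List.get_eq_getElem]
      congr 1
      exact hl₀map.symm
    rw [this, List.getElem_map]
end

section
/- Let A = (Q, Σ, S, Δ, F) be a nondeterministic finite automaton with finite state set Q, let u ∈ Σ* be a finite word and v ∈ Σ⁺ a nonempty finite word. Then the ultimately periodic ω-word u·v^ω is in L_ω(A) (under Büchi acceptance) if and only if there exist states p, q ∈ Q and natural numbers n ≥ 0 and m ≥ 1 such that: p is reachable from some initial state by a run on u; q is reachable from p by a run on vⁿ (the n-fold concatenation of v); and there exists a run on vᵐ from q back to q that visits an accepting state of F at some point. -/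
/-- A finite run of an NFA on a word `w` from state `p` to state `q`, recorded by the
state sequence `r 0, r 1, …, r |w|`. -/
def FinRun {α Q : Type*} (M : NFA α Q) (p : Q) (w : List α) (r : ℕ → Q) (q : Q) : Prop :=
  r 0 = p ∧ r w.length = q ∧
    ∀ (i : ℕ) (h : i < w.length), r (i + 1) ∈ M.step (r i) (w.get ⟨i, h⟩)

lemma mem_evalFrom_iff_run {α Q : Type*} (M : NFA α Q) (S : Set Q) (w : List α) (q : Q) :
    q ∈ M.evalFrom S w ↔ ∃ r : ℕ → Q, r 0 ∈ S ∧ r w.length = q ∧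
      ∀ (i : ℕ) (h : i < w.length), r (i + 1) ∈ M.step (r i) (w.get ⟨i, h⟩) := by
  induction w generalizing S with
  | nil =>
    simp only [NFA.evalFrom, List.foldl_nil, List.length_nil]
    constructor
    · intro hq
      exact ⟨fun _ => q, hq, rfl, fun i h => absurd h (Nat.not_lt_zero i)⟩
    · rintro ⟨r, h0, hend, _⟩
      rw [← hend]; exact h0
  | cons a w ih =>
    have : M.evalFrom S (a :: w) = M.evalFrom (M.stepSet S a) w := rfl
    rw [this, ih]
    constructor
    · rintro ⟨r', h0, hend, hstep⟩
      rw [NFA.mem_stepSet] at h0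
      obtain ⟨s, hs, hs'⟩ := h0
      refine ⟨fun i => match i with | 0 => s | i+1 => r' i, hs, hend, ?_⟩
      intro i h
      match i with
      | 0 => exact hs'
      | i+1 => exact hstep i (by simpa using h)
    · rintro ⟨r, h0, hend, hstep⟩
      refine ⟨fun i => r (i+1), ?_, hend, fun i h => hstep (i+1) (by simpa using h)⟩
      rw [NFA.mem_stepSet]
      exact ⟨r 0, h0, hstep 0 (by simp)⟩

lemma len_flatten_replicate {α : Type*} (k : ℕ) (v : List α) :
    ((List.replicate k v).flatten).length = k * v.length := by
  simp [List.length_flatten, mul_comm]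

lemma get_flatten_replicate {α : Type*} [Inhabited α] (k : ℕ) (v : List α) (hv : v ≠ [])
    (j : ℕ) (h : j < ((List.replicate k v).flatten).length) :
    ((List.replicate k v).flatten).get ⟨j, h⟩ = v.getD (j % v.length) default := by
  induction k generalizing j with
  | zero => simp at h
  | succ k ih =>
    have hrep : (List.replicate (k+1) v).flatten = v ++ (List.replicate k v).flatten := by
      simp [List.replicate_succ]
    have hL : 0 < v.length := List.length_pos_iff.mpr hv
    rcases lt_or_ge j v.length with hj | hj
    · have : ((List.replicate (k+1) v).flatten).get ⟨j, h⟩ = v.get ⟨j, hj⟩ := by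
        simp only [List.get_eq_getElem]
        rw [List.getElem_of_eq hrep, List.getElem_append_left hj]
      rw [this, Nat.mod_eq_of_lt hj, List.getD_eq_getElem v default hj]
      simp
    · have h' : j - v.length < ((List.replicate k v).flatten).length := by
        have := h; rw [hrep, List.length_append] at this; omega
      have : ((List.replicate (k+1) v).flatten).get ⟨j, h⟩
          = ((List.replicate k v).flatten).get ⟨j - v.length, h'⟩ := by
        simp only [List.get_eq_getElem]
        rw [List.getElem_of_eq hrep, List.getElem_append_right hj]
      rw [this, ih (j - v.length) h', Nat.mod_eq_sub_mod hj]


/-- an ultimately periodic word `u · v^ω` is Büchi-accepted by an NFA iff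
there are states `p, q` with `p` reachable from an initial state on `u`, `q` reachable
from `p` on `vⁿ`, and a run on `vᵐ` (`m ≥ 1`) from `q` back to `q` visiting an
accepting state. -/
theorem buchi_accepts_upWord_iff_lasso
    {α Q : Type*} [Fintype α] [Fintype Q] [Inhabited α]
    (M : NFA α Q) (u v : List α) (hv : v ≠ []) :
    BuchiAccepts M (upWord u v) ↔
    ∃ (p q : Q) (n m : ℕ), 1 ≤ m ∧
      p ∈ M.evalFrom M.start u ∧
      q ∈ M.evalFrom {p} (List.replicate n v).flatten ∧
      ∃ r : ℕ → Q, FinRun M q ((List.replicate m v).flatten) r q ∧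
        ∃ i : ℕ, i ≤ ((List.replicate m v).flatten).length ∧ r i ∈ M.accept := by
  have hL : 0 < v.length := List.length_pos_iff.mpr hv
  have hupu : ∀ i (h : i < u.length), upWord u v i = u.get ⟨i, h⟩ := by
    intro i h
    simp [upWord, h, List.getD_eq_getElem u default h]
  have hupv : ∀ i, u.length ≤ i →
      upWord u v i = v.getD ((i - u.length) % v.length) default := by
    intro i hi
    simp [upWord, Nat.not_lt.mpr hi]
  constructor
  · rintro ⟨r, hstart, hstep, hacc⟩
    have hp : r u.length ∈ M.evalFrom M.start u := by
      rw [mem_evalFrom_iff_run]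
      exact ⟨r, hstart, rfl, fun i h => by rw [← hupu i h]; exact hstep i⟩
    obtain ⟨q, hqinf⟩ := Finite.exists_infinite_fiber (fun k => r (u.length + k * v.length))
    have hqinf' : ((fun k => r (u.length + k * v.length)) ⁻¹' {q}).Infinite :=
      Set.infinite_coe_iff.mp hqinf
    obtain ⟨k1, hk1⟩ := hqinf'.nonempty
    simp only [Set.mem_preimage, Set.mem_singleton_iff] at hk1
    obtain ⟨a, ha1, ha2⟩ := hacc (u.length + k1 * v.length + 1)
    obtain ⟨k2, hk2, hk2gt⟩ := hqinf'.exists_gt (max k1 a)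
    simp only [Set.mem_preimage, Set.mem_singleton_iff] at hk2
    have hk21 : k1 < k2 := lt_of_le_of_lt (le_max_left _ _) hk2gt
    have hk2a : a < k2 := lt_of_le_of_lt (le_max_right _ _) hk2gt
    have hk2L : k2 ≤ k2 * v.length := Nat.le_mul_of_pos_right k2 hL
    have hmul : k1 * v.length ≤ k2 * v.length := Nat.mul_le_mul_right _ (le_of_lt hk21)
    have hsub : k1 * v.length + (k2 - k1) * v.length = k2 * v.length := by
      rw [Nat.sub_mul]; omega
    refine ⟨r u.length, q, k1, k2 - k1, by omega, hp, ?_, ?_⟩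
    · rw [mem_evalFrom_iff_run]
      refine ⟨fun i => r (u.length + i), rfl, ?_, ?_⟩
      · rw [len_flatten_replicate]; exact hk1
      · intro j h
        have hj : j < k1 * v.length := by rwa [len_flatten_replicate] at h
        have hlet : upWord u v (u.length + j) = v.getD (j % v.length) default := by
          rw [hupv _ (Nat.le_add_right _ _)]
          congr 2
          omega
        show r (u.length + (j + 1)) ∈
          M.step (r (u.length + j)) ((List.replicate k1 v).flatten.get ⟨j, h⟩)
        rw [get_flatten_replicate k1 v hv j h, ← hlet,
          show u.length + (j + 1) = (u.length + j) + 1 from by omega]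
        exact hstep (u.length + j)
    · refine ⟨fun i => r (u.length + k1 * v.length + i), ⟨by simpa using hk1, ?_, ?_⟩,
        a - (u.length + k1 * v.length), ?_, ?_⟩
      · show r (u.length + k1 * v.length + ((List.replicate (k2 - k1) v).flatten).length) = q
        rw [len_flatten_replicate,
          show u.length + k1 * v.length + (k2 - k1) * v.length = u.length + k2 * v.length
            from by omega]
        exact hk2
      · intro j h
        have hj : j < (k2 - k1) * v.length := by rwa [len_flatten_replicate] at h
        have hlet : upWord u v (u.length + k1 * v.length + j)
            = v.getD (j % v.length) default := by
          rw [hupv _ (by omega),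
            show u.length + k1 * v.length + j - u.length = j + k1 * v.length from by omega,
            Nat.add_mul_mod_self_right]
        show r (u.length + k1 * v.length + (j + 1)) ∈
          M.step (r (u.length + k1 * v.length + j))
            ((List.replicate (k2 - k1) v).flatten.get ⟨j, h⟩)
        rw [get_flatten_replicate _ v hv j h, ← hlet, show u.length + k1 * v.length + (j + 1)
            = (u.length + k1 * v.length + j) + 1 from by omega]
        exact hstep _
      · rw [len_flatten_replicate]; omega
      · show r (u.length + k1 * v.length + (a - (u.length + k1 * v.length))) ∈ M.accept
        rw [show u.length + k1 * v.length + (a - (u.length + k1 * v.length)) = a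
          from by omega]
        exact ha2
  · rintro ⟨p, q, n, m, hm, hp, hq, r, ⟨hr0, hrW, hrstep⟩, i0, hi0, hi0acc⟩
    rw [mem_evalFrom_iff_run] at hp hq
    obtain ⟨r0, hr00, hr0u, hr0step⟩ := hp
    obtain ⟨r1, hr10, hr1V, hr1step⟩ := hq
    rw [Set.mem_singleton_iff] at hr10
    set V := (List.replicate n v).flatten with hVdef
    set W := (List.replicate m v).flatten with hWdef
    have lenV : V.length = n * v.length := len_flatten_replicate n v
    have lenW : W.length = m * v.length := len_flatten_replicate m v
    have hWpos : 0 < W.length := by rw [lenW]; exact Nat.mul_pos (by omega) hL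
    set b := u.length + V.length with hbdef
    set R : ℕ → Q := fun i =>
      if i < u.length then r0 i
      else if i < b then r1 (i - u.length)
      else r ((i - b) % W.length) with hRdef
    have RA : ∀ i, i ≤ u.length → R i = r0 i := by
      intro i hi
      by_cases h : i < u.length
      · simp [hRdef, h]
      · have hieq : i = u.length := by omega
        subst hieq
        simp only [hRdef, if_neg (lt_irrefl _)]
        by_cases h2 : u.length < b
        · rw [if_pos h2, Nat.sub_self, hr10, ← hr0u]
        · rw [if_neg h2]
          have hV0 : V.length = 0 := by omega
          have hq' : q = p := by rw [← hr1V, hV0, hr10]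
          rw [show u.length - b = 0 from by omega, Nat.zero_mod, hr0, hq', ← hr0u]
    have RB : ∀ i, u.length ≤ i → i ≤ b → R i = r1 (i - u.length) := by
      intro i h1 h2
      by_cases h : i < b
      · simp [hRdef, Nat.not_lt.mpr h1, h]
      · have hieq : i = b := by omega
        subst hieq
        simp only [hRdef, if_neg (Nat.not_lt.mpr h1), if_neg (lt_irrefl _)]
        rw [Nat.sub_self, Nat.zero_mod, hr0, ← hr1V]
        congr 1
        omega
    have RC : ∀ i, b ≤ i → R i = r ((i - b) % W.length) := by
      intro i h1
      simp [hRdef, Nat.not_lt.mpr (show u.length ≤ i from by omega), Nat.not_lt.mpr h1]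
    have wrap : ∀ j, r ((j + 1) % W.length) = r (j % W.length + 1) := by
      intro j
      have hc : j % W.length < W.length := Nat.mod_lt _ hWpos
      by_cases h : j % W.length + 1 < W.length
      · rw [← Nat.mod_add_mod, Nat.mod_eq_of_lt h]
      · have heq : j % W.length + 1 = W.length := by omega
        rw [← Nat.mod_add_mod, heq, Nat.mod_self, hr0, ← hrW]
    refine ⟨R, ?_, ?_, ?_⟩
    · rw [RA 0 (Nat.zero_le _)]; exact hr00
    · intro i
      by_cases h1 : i < u.length
      · rw [RA i (le_of_lt h1), RA (i+1) h1, hupu i h1]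
        exact hr0step i h1
      · by_cases h2 : i < b
        · have hj : i - u.length < V.length := by omega
          rw [RB i (by omega) (by omega), RB (i+1) (by omega) (by omega),
            show i + 1 - u.length = (i - u.length) + 1 from by omega,
            hupv i (by omega), ← get_flatten_replicate n v hv _ hj]
          exact hr1step _ hj
        · have hb : b ≤ i := by omega
          have hc : (i - b) % W.length < W.length := Nat.mod_lt _ hWpos
          rw [RC i hb, RC (i+1) (by omega),
            show i + 1 - b = (i - b) + 1 from by omega, wrap (i - b),
            hupv i (by omega)]
          have e2 : (i - b) % W.length % v.length = (i - b) % v.length :=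
            Nat.mod_mod_of_dvd _ (by rw [lenW]; exact dvd_mul_left _ _)
          have e1 : (i - u.length) % v.length = (i - b) % v.length := by
            rw [show i - u.length = (i - b) + V.length from by omega, lenV,
              Nat.add_mul_mod_self_right]
          have hlet : v.getD ((i - u.length) % v.length) default
              = W.get ⟨(i - b) % W.length, hc⟩ := by
            rw [get_flatten_replicate m v hv _ hc, e2, e1]
          rw [hlet]
          exact hrstep _ hc
    · intro N
      have hi1acc : r (i0 % W.length) ∈ M.accept := by
        by_cases h : i0 < W.length
        · rwa [Nat.mod_eq_of_lt h]
        · rw [show i0 = W.length from by omega, Nat.mod_self, hr0, ← hrW]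
          rwa [show i0 = W.length from by omega] at hi0acc
      have hNW : N ≤ N * W.length := Nat.le_mul_of_pos_right N hWpos
      refine ⟨b + N * W.length + i0 % W.length, by omega, ?_⟩
      rw [RC _ (by omega),
        show b + N * W.length + i0 % W.length - b = N * W.length + i0 % W.length
          from by omega,
        show N * W.length + i0 % W.length = i0 % W.length + N * W.length from by omega,
        Nat.add_mul_mod_self_right, Nat.mod_eq_of_lt (Nat.mod_lt _ hWpos)]
      exact hi1acc
end

section
/- Let n ≥ 1, let Γ = {0,1,#} (with 0, 1, # distinct symbols), and let Δ = Γ × Γ. For equal-length words x, y over Γ, their convolution conv(x,y) is the word over Δ of the same length whose i-th letter is (x[i], y[i]). Let E'_n be the language over Δ consisting of all words conv(u·#·v, u'·#·v') where u, v, u', v' ∈ {0,1}ⁿ and for every index i < n, u[i] XOR v[i] = u'[i] XOR v'[i]. Then every nondeterministic finite automaton (with finite state set Q, a set of initial states, transition function Δ' : Q → Δ → Set Q, and a set of accepting states) whose accepted language equals E'_n has at least 2ⁿ states. -/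
/-!
Fooling set. For `s ∈ {0,1}ⁿ` put `x_s = conv(s#, 0ⁿ#)` and `y_s = conv(0ⁿ, s)`. The word
`x_s y_t = conv(s#0ⁿ, 0ⁿ#t)` lies in `E'_n` iff `s XOR 0ⁿ = 0ⁿ XOR t`, i.e. iff `s = t`.
An NFA accepting `x_s y_s` is in some state `q_s` after reading `x_s` from which it accepts
`y_s`; if `q_s = q_t` it would also accept `x_s y_t`, so `s ↦ q_s` is injective and there are
at least `2ⁿ` states.
-/

/-- The encoding `u·#·v` of a pair of bit strings as a word over `Γ = {0,1,#}`, where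
the bits are modelled by `some false / some true : Option Bool` and `#` by `none`. -/
def encB (u v : List Bool) : List (Option Bool) :=
  u.map some ++ [none] ++ v.map some

/-- The language `E'_n` over `Δ = Γ × Γ`: convolutions `conv(u·#·v, u'·#·v')` of pairs
of words `u#v` and `u'#v'` with `u, v, u', v' ∈ {0,1}ⁿ` such that
`u[i] XOR v[i] = u'[i] XOR v'[i]` for every `i < n`.  The convolution of two
equal-length words is their `List.zip`. -/
def EPrime (n : ℕ) : Set (List (Option Bool × Option Bool)) :=
  {w | ∃ u v u' v' : List Bool,
    u.length = n ∧ v.length = n ∧ u'.length = n ∧ v'.length = n ∧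
    (∀ i < n, xor (u.getD i false) (v.getD i false)
            = xor (u'.getD i false) (v'.getD i false)) ∧
    w = (encB u v).zip (encB u' v')}

namespace NFA

variable {α σ : Type*} (M : NFA α σ)

theorem append_mem_accepts_iff {x y : List α} :
    x ++ y ∈ M.accepts ↔ ∃ q ∈ M.eval x, y ∈ M.acceptsFrom {q} := by
  rw [accepts_eq_acceptsFrom_start, append_mem_acceptsFrom, mem_acceptsFrom]
  constructor
  · rintro ⟨a, ha, hq⟩
    obtain ⟨q, hq, hqa⟩ := mem_evalFrom_iff_exists.1 hq
    exact ⟨q, hq, a, ha, hqa⟩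
  · rintro ⟨q, hq, a, ha, hqa⟩
    exact ⟨a, ha, mem_evalFrom_iff_exists.2 ⟨q, hq, hqa⟩⟩

theorem card_le_card_of_fooling [Fintype σ] {ι : Type*} [Fintype ι] (x y : ι → List α)
    (hacc : ∀ i, x i ++ y i ∈ M.accepts)
    (hfool : ∀ i j, x i ++ y j ∈ M.accepts → x j ++ y i ∈ M.accepts → i = j) :
    Fintype.card ι ≤ Fintype.card σ := by
  choose q hq hqy using fun i ↦ M.append_mem_accepts_iff.1 (hacc i)
  refine Fintype.card_le_of_injective q fun i j hij ↦ hfool i j ?_ ?_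
  · exact M.append_mem_accepts_iff.2 ⟨q i, hq i, hij ▸ hqy j⟩
  · exact M.append_mem_accepts_iff.2 ⟨q j, hq j, hij ▸ hqy i⟩

end NFA

theorem List.ext_getD {α : Type*} {l₁ l₂ : List α} (d : α) (hl : l₁.length = l₂.length)
    (h : ∀ i < l₁.length, l₁.getD i d = l₂.getD i d) : l₁ = l₂ :=
  List.ext_getElem hl fun i h₁ h₂ ↦ by simpa [List.getD_eq_getElem, h₁, h₂] using h i h₁

theorem length_encB (u v : List Bool) : (encB u v).length = u.length + 1 + v.length := by
  simp [encB]; omega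

theorem encB_inj {u v a b : List Bool} (h : u.length = a.length) :
    encB u v = encB a b ↔ u = a ∧ v = b := by
  refine ⟨fun huv ↦ ?_, fun ⟨hu, hv⟩ ↦ hu ▸ hv ▸ rfl⟩
  obtain ⟨hua, hvb⟩ := List.append_inj huv (by simp [h])
  obtain ⟨hua, -⟩ := List.append_inj hua (by simp [h])
  exact ⟨List.map_injective_iff.2 (Option.some_injective _) hua,
    List.map_injective_iff.2 (Option.some_injective _) hvb⟩

theorem zip_encB (u v u' v' : List Bool) (h : u.length = u'.length) :
    (encB u v).zip (encB u' v') =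
      (u.map some).zip (u'.map some) ++ [(none, none)] ++ (v.map some).zip (v'.map some) := by
  unfold encB
  rw [List.zip_append (by simp [h]), List.zip_append (by simp [h])]
  rfl

theorem zip_encB_mem_EPrime_iff {n : ℕ} {u v u' v' : List Bool} (hu : u.length = n)
    (hv : v.length = n) (hu' : u'.length = n) (hv' : v'.length = n) :
    (encB u v).zip (encB u' v') ∈ EPrime n ↔
      ∀ i < n, xor (u.getD i false) (v.getD i false) =
        xor (u'.getD i false) (v'.getD i false) := by
  refine ⟨fun ⟨a, b, a', b', ha, hb, ha', hb', hxor, heq⟩ ↦ ?_,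
    fun hxor ↦ ⟨u, v, u', v', hu, hv, hu', hv', hxor, rfl⟩⟩
  have hzip := congrArg List.unzip heq
  rw [List.unzip_zip (by simp [length_encB, *]), List.unzip_zip (by simp [length_encB, *]),
    Prod.mk.injEq, encB_inj (by rw [hu, ha]), encB_inj (by rw [hu', ha'])] at hzip
  obtain ⟨⟨rfl, rfl⟩, rfl, rfl⟩ := hzip
  exact hxor

theorem zip_encB_replicate_mem_EPrime_iff {n : ℕ} {u t : List Bool} (hu : u.length = n)
    (ht : t.length = n) :
    (encB u (List.replicate n false)).zip (encB (List.replicate n false) t) ∈ EPrime n ↔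
      u = t := by
  rw [zip_encB_mem_EPrime_iff hu (by simp) (by simp) ht]
  constructor
  · intro h
    exact List.ext_getD false (hu.trans ht.symm) fun i hi ↦ by simpa using h i (hu ▸ hi)
  · rintro rfl i hi
    simp [Bool.xor_comm]

theorem EPrime_nfa_lower_bound_general
    (n : ℕ) (Q : Type) [Fintype Q]
    (M : NFA (Option Bool × Option Bool) Q)
    (hM : M.accepts = EPrime n) :
    2 ^ n ≤ Fintype.card Q := by
  have hcross (s t : List.Vector Bool n) :
      ((s.toList.map some).zip ((List.replicate n false).map some) ++ [(none, none)]) ++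
          ((List.replicate n false).map some).zip (t.toList.map some) ∈ M.accepts ↔ s = t := by
    rw [← zip_encB _ _ _ _ (by simp), hM, ← List.Vector.toList_injective.eq_iff]
    exact zip_encB_replicate_mem_EPrime_iff s.toList_length t.toList_length
  calc 2 ^ n = Fintype.card (List.Vector Bool n) := by simp
    _ ≤ Fintype.card Q :=
      M.card_le_card_of_fooling _ _ (fun s ↦ (hcross s s).2 rfl)
        fun s t hst _ ↦ (hcross s t).1 hst

/-- every NFA accepting `E'_n` has at least `2ⁿ` states. -/
theorem EPrime_nfa_lower_bound
    (n : ℕ) (hn : 1 ≤ n) (Q : Type) [Fintype Q]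
    (M : NFA (Option Bool × Option Bool) Q)
    (hM : M.accepts = EPrime n) :
    2 ^ n ≤ Fintype.card Q :=
  EPrime_nfa_lower_bound_general n Q M hM
end
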